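/- arXiv:2411.12129 — 8 statements merged into one kernel-verified Lean document; each statement's English description precedes it below -/
import Mathlib

section
/- Let p be a prime, k a field of characteristic p, m a positive integer, and λ an integer with 1 ≤ λ ≤ p^m − 1. Then Σ_{i=0}^{p^m − 1} (1+y)^{λ i} ≡ 0 modulo the ideal (y^{p^m}) in k[y] if and only if p divides λ. -/
open Polynomial

private lemma sum_range_mul_pow {R : Type*} [CommRing R] (u : R) (a b : ℕ) :
    ∑ i ∈ Finset.range (a * b), u ^ i =
      (∑ j ∈ Finset.range b, (u ^ a) ^ j) * (∑ k ∈ Finset.range a, u ^ k) := by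
  induction b with
  | zero => simp
  | succ b ih =>
    rw [Nat.mul_succ, Finset.sum_range_add, ih, Finset.sum_range_succ, add_mul]
    congr 1
    rw [Finset.mul_sum]
    refine Finset.sum_congr rfl fun k hk => ?_
    rw [pow_add, ← pow_mul]

/-- For a field `k` of characteristic `p`, `m ≥ 1` and `1 ≤ λ ≤ p^m - 1`,
the sum `Σ_{i=0}^{p^m-1} (1+y)^{λ i}` vanishes modulo `(y^{p^m})` in `k[y]`
iff `p ∣ λ`. -/
theorem stmt1 (p : ℕ) (hp : p.Prime) (k : Type*) [Field k] [CharP k p]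
    (m : ℕ) (hm : 1 ≤ m) (lam : ℕ) (hl1 : 1 ≤ lam) (hl2 : lam ≤ p ^ m - 1) :
    (∑ i ∈ Finset.range (p ^ m), (1 + X : Polynomial k) ^ (lam * i)) ∈
      Ideal.span {(X : Polynomial k) ^ (p ^ m)} ↔ p ∣ lam := by
  haveI := Fact.mk hp
  haveI : ExpChar (Polynomial k) p := ExpChar.prime hp
  set q := p ^ m with hq
  have hq1 : 1 < q := Nat.one_lt_pow (by omega) hp.one_lt
  have hq0 : 0 < q := by omega
  set I : Ideal (Polynomial k) := Ideal.span {(X : Polynomial k) ^ q} with hI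
  set φ : Polynomial k →+* Polynomial k ⧸ I := Ideal.Quotient.mk I with hφ
  have hkey : ((1 : Polynomial k) + X) ^ q = 1 + X ^ q := by
    rw [add_pow_char_pow, one_pow]
  set s : Polynomial k ⧸ I := φ (1 + X) with hsdef
  have hXq : φ (X ^ q) = 0 := by
    rw [hφ, Ideal.Quotient.eq_zero_iff_mem]
    exact Ideal.subset_span rfl
  have hs : s ^ q = 1 := by
    rw [hsdef, ← map_pow, hkey, map_add, hXq, map_one, add_zero]
  have hmod : ∀ n : ℕ, s ^ n = s ^ (n % q) := by
    intro n
    conv_lhs => rw [← Nat.div_add_mod n q]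
    rw [pow_add, mul_comm, pow_mul, hs, one_pow, mul_one]
  have hmem : (∑ i ∈ Finset.range q, (1 + X : Polynomial k) ^ (lam * i)) ∈ I ↔
      ∑ i ∈ Finset.range q, s ^ (lam * i) = 0 := by
    rw [← Ideal.Quotient.eq_zero_iff_mem, map_sum]
    simp_rw [map_pow]
    rfl
  rw [hmem]
  constructor
  · -- forward direction, by contraposition
    intro hsum
    by_contra hpl
    have hcop : Nat.Coprime lam q :=
      ((hp.coprime_iff_not_dvd.mpr hpl).symm).pow_right m
    obtain ⟨mu, -, hmu⟩ := Nat.exists_mul_mod_eq_one_of_coprime hcop hq1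
    have key : ∀ x y : ℕ, (x * y) % q = 1 → ∀ a < q, (x * ((y * a) % q)) % q = a := by
      intro x y hxy a ha
      have h1 : x * ((y * a) % q) ≡ x * (y * a) [MOD q] :=
        (Nat.mod_modEq (y * a) q).mul_left x
      have h2 : x * (y * a) ≡ 1 * a [MOD q] := by
        have hxy' : x * y ≡ 1 [MOD q] := by
          unfold Nat.ModEq
          rw [hxy, Nat.mod_eq_of_lt hq1]
        have := hxy'.mul_right a
        rwa [mul_assoc] at this
      have h3 : x * ((y * a) % q) ≡ a [MOD q] := h1.trans (by rwa [one_mul] at h2)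
      have h4 : x * ((y * a) % q) % q = a % q := h3
      rwa [Nat.mod_eq_of_lt ha] at h4
    have hre : ∑ i ∈ Finset.range q, s ^ (lam * i) = ∑ i ∈ Finset.range q, s ^ i := by
      simp_rw [fun i => hmod (lam * i)]
      refine Finset.sum_nbij' (fun a => (lam * a) % q) (fun b => (mu * b) % q)
        (fun a _ => Finset.mem_range.mpr (Nat.mod_lt _ hq0))
        (fun a _ => Finset.mem_range.mpr (Nat.mod_lt _ hq0)) ?_ ?_ (fun a _ => rfl)
      · intro a ha
        exact key mu lam (by rwa [mul_comm]) a (Finset.mem_range.mp ha)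
      · intro a ha
        exact key lam mu hmu a (Finset.mem_range.mp ha)
    have hT : (∑ i ∈ Finset.range q, ((1 : Polynomial k) + X) ^ i) = X ^ (q - 1) := by
      have h1 := geom_sum_mul ((1 : Polynomial k) + X) q
      rw [add_sub_cancel_left, hkey, add_sub_cancel_left] at h1
      have h2 : (X : Polynomial k) ^ q = X ^ (q - 1) * X := by
        rw [← pow_succ]
        congr 1
        omega
      exact mul_right_cancel₀ X_ne_zero (h1.trans h2)
    have hφT : ∑ i ∈ Finset.range q, s ^ i = φ (X ^ (q - 1)) := by
      rw [hsdef]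
      simp_rw [← map_pow]
      rw [← map_sum, hT]
    rw [hre, hφT, hφ, Ideal.Quotient.eq_zero_iff_mem, hI, Ideal.mem_span_singleton] at hsum
    have := (Polynomial.X_pow_dvd_iff.mp hsum) (q - 1) (by omega)
    rw [Polynomial.coeff_X_pow, if_pos rfl] at this
    exact one_ne_zero this
  · rintro ⟨c, rfl⟩
    have hrw : ∀ i, s ^ (p * c * i) = (s ^ (p * c)) ^ i := fun i => by rw [← pow_mul]
    simp_rw [hrw]
    have hqsplit : q = p ^ (m - 1) * p := by
      rw [← pow_succ, hq]
      congr 1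
      omega
    rw [hqsplit, sum_range_mul_pow]
    have hu : ((s ^ (p * c)) ^ (p ^ (m - 1))) = 1 := by
      rw [← pow_mul]
      have h3 : p * c * p ^ (m - 1) = q * c := by
        rw [hq]
        rw [show p ^ m = p * p ^ (m - 1) by rw [← pow_succ']; congr 1; omega]
        ring
      rw [h3, pow_mul, hs, one_pow]
    rw [hu]
    have hz : (∑ _j ∈ Finset.range p, (1 : Polynomial k ⧸ I) ^ _j) = 0 := by
      simp only [one_pow, Finset.sum_const, Finset.card_range, nsmul_eq_mul, mul_one]
      rw [← map_natCast φ p, CharP.cast_eq_zero, map_zero]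
    rw [hz, zero_mul]
end

section
/- Let p be a prime, k a field of characteristic p, m a positive integer, and λ an integer with 1 ≤ λ ≤ p^m − 1. In the ring S = k[x,y]/(x^p, y^{p^m}), define the sequence (x_1,y_1) = (x,y) and (x_{n+1}, y_{n+1}) = ((1+y)^λ · x_n + x, y + y_n + y·y_n). Then (x_{p^m}, y_{p^m}) = (0,0) in S × S if and only if p divides λ. (In other words, the k-group scheme G_λ of order p^{m+1} is killed by p^m if and only if v_p(λ) ≥ 1.) -/
open MvPolynomial
set_option maxHeartbeats 1000000

lemma aux1 {R : Type*} [CommRing R] (t : R) (r : ℕ) (ht : t ^ r = 1) (n : ℕ) :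
    ∑ i ∈ Finset.range (n * r), t ^ i = n * ∑ i ∈ Finset.range r, t ^ i := by
  induction n with
  | zero => simp
  | succ n ih =>
    rw [Nat.succ_mul, Finset.sum_range_add, ih]
    have h : ∀ i, t ^ (n * r + i) = t ^ i := fun i => by
      rw [pow_add, mul_comm n r, pow_mul, ht, one_pow, one_mul]
    simp_rw [h]
    push_cast
    ring

lemma aux2 {R : Type*} [CommRing R] (u : R) (q lam : ℕ) (hq : 0 < q) (hu : u ^ q = 1)
    (hcop : Nat.Coprime lam q) :
    ∑ i ∈ Finset.range q, u ^ (lam * i) = ∑ i ∈ Finset.range q, u ^ i := by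
  have hmod : ∀ a : ℕ, u ^ a = u ^ (a % q) := fun a => by
    conv_lhs => rw [← Nat.mod_add_div a q]
    rw [pow_add, pow_mul, hu, one_pow, mul_one]
  haveI : NeZero q := ⟨hq.ne'⟩
  have hunit : IsUnit (lam : ZMod q) := by
    rw [ZMod.isUnit_iff_coprime]
    exact hcop
  set b := ((lam : ZMod q)⁻¹).val with hb
  have hba : b * lam ≡ 1 [MOD q] := by
    rw [← ZMod.natCast_eq_natCast_iff]
    push_cast
    rw [hb, ZMod.natCast_val, ZMod.cast_id]
    exact ZMod.inv_mul_of_unit _ hunit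
  have hab : lam * b ≡ 1 [MOD q] := by rwa [mul_comm] at hba
  refine Finset.sum_nbij' (fun i => lam * i % q) (fun j => b * j % q) ?_ ?_ ?_ ?_ ?_
  · intro a ha
    exact Finset.mem_range.2 (Nat.mod_lt _ hq)
  · intro a ha
    exact Finset.mem_range.2 (Nat.mod_lt _ hq)
  · intro a ha
    have h1 : b * (lam * a % q) ≡ a [MOD q] := by
      calc b * (lam * a % q) ≡ b * (lam * a) [MOD q] :=
            Nat.ModEq.mul_left _ (Nat.mod_modEq _ _)
        _ = b * lam * a := by ring
        _ ≡ 1 * a [MOD q] := hba.mul_right a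
        _ = a := one_mul a
    rwa [Nat.ModEq, Nat.mod_eq_of_lt (Finset.mem_range.1 ha)] at h1
  · intro a ha
    have h1 : lam * (b * a % q) ≡ a [MOD q] := by
      calc lam * (b * a % q) ≡ lam * (b * a) [MOD q] :=
            Nat.ModEq.mul_left _ (Nat.mod_modEq _ _)
        _ = lam * b * a := by ring
        _ ≡ 1 * a [MOD q] := hab.mul_right a
        _ = a := one_mul a
    rwa [Nat.ModEq, Nat.mod_eq_of_lt (Finset.mem_range.1 ha)] at h1
  · intro a ha
    exact hmod _

lemma aux3 (k : Type*) [Field k] (p : ℕ) (hp : p.Prime) [CharP k p] (m : ℕ) :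
    ∑ i ∈ Finset.range (p ^ m), (1 + X 1 : MvPolynomial (Fin 2) k) ^ i
      = X 1 ^ (p ^ m - 1) := by
  haveI : Fact p.Prime := ⟨hp⟩
  have hq1 : 1 ≤ p ^ m := Nat.one_le_pow _ _ hp.pos
  have hX : (X 1 : MvPolynomial (Fin 2) k) ≠ 0 := X_ne_zero 1
  apply mul_right_cancel₀ hX
  have hg := geom_sum_mul (1 + X 1 : MvPolynomial (Fin 2) k) (p ^ m)
  rw [add_sub_cancel_left] at hg
  rw [hg, add_pow_char_pow, one_pow, add_sub_cancel_left, ← pow_succ,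
    Nat.sub_add_cancel hq1]


/-- The coordinate ring `k[x,y]/(x^p, y^{p^m})` of the group scheme `G_λ`. -/
abbrev Gring (k : Type*) [CommRing k] (p m : ℕ) : Type _ :=
  MvPolynomial (Fin 2) k ⧸
    Ideal.span {(X 0 : MvPolynomial (Fin 2) k) ^ p,
      (X 1 : MvPolynomial (Fin 2) k) ^ (p ^ m)}

/-- The image of `x` in `k[x,y]/(x^p, y^{p^m})`. -/
noncomputable def gx (k : Type*) [CommRing k] (p m : ℕ) : Gring k p m :=
  Ideal.Quotient.mk _ (X 0)

/-- The image of `y` in `k[x,y]/(x^p, y^{p^m})`. -/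
noncomputable def gy (k : Type*) [CommRing k] (p m : ℕ) : Gring k p m :=
  Ideal.Quotient.mk _ (X 1)

noncomputable def gmk (k : Type*) [CommRing k] (p m : ℕ) :
    MvPolynomial (Fin 2) k →+* Gring k p m :=
  Ideal.Quotient.mk _

lemma gx_eq (k : Type*) [CommRing k] (p m : ℕ) : gx k p m = gmk k p m (X 0) := rfl

lemma gy_eq (k : Type*) [CommRing k] (p m : ℕ) : gy k p m = gmk k p m (X 1) := rfl

lemma gmk_eq_zero (k : Type*) [CommRing k] (p m : ℕ) {f : MvPolynomial (Fin 2) k}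
    (h : f ∈ Ideal.span {(X 0 : MvPolynomial (Fin 2) k) ^ p,
      (X 1 : MvPolynomial (Fin 2) k) ^ (p ^ m)}) : gmk k p m f = 0 :=
  Ideal.Quotient.eq_zero_iff_mem.2 h

lemma aux4 (k : Type*) [Field k] (p m : ℕ) (hp : p.Prime) :
    gx k p m * gy k p m ^ (p ^ m - 1) ≠ 0 := by
  have hq1 : 1 ≤ p ^ m := Nat.one_le_pow _ _ hp.pos
  have hp2 := hp.two_le
  intro h
  rw [gx, gy, ← map_pow, ← map_mul, Ideal.Quotient.eq_zero_iff_mem,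
    Ideal.mem_span_pair] at h
  obtain ⟨a, b, hab⟩ := h
  set μ : Fin 2 →₀ ℕ := Finsupp.single 0 1 + Finsupp.single 1 (p ^ m - 1) with hμ
  have := congrArg (coeff μ) hab
  rw [coeff_add, X_pow_eq_monomial, X_pow_eq_monomial, coeff_mul_monomial',
    coeff_mul_monomial'] at this
  rw [if_neg, if_neg, add_zero] at this
  · have hr : (X 0 * X 1 ^ (p ^ m - 1) : MvPolynomial (Fin 2) k) = monomial μ 1 := by
      rw [X_pow_eq_monomial, X, monomial_mul, one_mul]
    rw [hr, coeff_monomial, if_pos rfl] at this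
    exact one_ne_zero this.symm
  · intro hle
    rw [Finsupp.le_def] at hle
    have h0 := hle 1
    simp [μ, Finsupp.single_apply] at h0
    omega
  · intro hle
    rw [Finsupp.le_def] at hle
    have h1 := hle 0
    simp [μ, Finsupp.single_apply] at h1
    omega

/-- The `k`-group scheme `G_λ` (of order `p^{m+1}`) is killed by `p^m`
iff `p ∣ λ`: the `p^m`-th power of the generic point is the identity iff `p ∣ λ`. -/
theorem stmt2 (p : ℕ) (hp : p.Prime) (k : Type*) [Field k] [CharP k p]
    (m : ℕ) (hm : 1 ≤ m) (lam : ℕ) (hl1 : 1 ≤ lam) (hl2 : lam ≤ p ^ m - 1)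
    (s : ℕ → Gring k p m × Gring k p m)
    (h1 : s 1 = (gx k p m, gy k p m))
    (hrec : ∀ n, 1 ≤ n →
      s (n + 1) = ((1 + gy k p m) ^ lam * (s n).1 + gx k p m,
        gy k p m + (s n).2 + gy k p m * (s n).2)) :
    s (p ^ m) = (0, 0) ↔ p ∣ lam := by
  haveI : Fact p.Prime := ⟨hp⟩
  have hq1 : 1 ≤ p ^ m := Nat.one_le_pow _ _ hp.pos
  have hYq : gy k p m ^ (p ^ m) = 0 := by
    rw [gy_eq, ← map_pow]
    exact gmk_eq_zero k p m (Ideal.subset_span (by simp))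
  have hu : (1 + gy k p m) ^ (p ^ m) = 1 := by
    have hX1 : ((1 + X 1 : MvPolynomial (Fin 2) k)) ^ (p ^ m) = 1 + X 1 ^ (p ^ m) := by
      rw [add_pow_char_pow, one_pow]
    have e1 : (1 + gy k p m) = gmk k p m (1 + X 1) := by
      rw [map_add, map_one, gy_eq]
    rw [e1, ← map_pow, hX1, map_add, map_one, map_pow, ← gy_eq, hYq, add_zero]
  have hp0 : (p : Gring k p m) = 0 := by
    rw [← map_natCast (gmk k p m) p, CharP.cast_eq_zero, map_zero]
  have hy : ∀ n, 1 ≤ n → (s n).2 = (1 + gy k p m) ^ n - 1 := by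
    intro n hn
    induction n, hn using Nat.le_induction with
    | base => rw [h1, pow_one]; ring
    | succ n hn ih =>
      rw [hrec n hn, ih]
      show gy k p m + _ + _ = _
      rw [pow_succ]
      ring
  have hx : ∀ n, 1 ≤ n →
      (s n).1 = gx k p m * ∑ i ∈ Finset.range n, ((1 + gy k p m) ^ lam) ^ i := by
    intro n hn
    induction n, hn using Nat.le_induction with
    | base => rw [h1]; simp
    | succ n hn ih =>
      rw [hrec n hn, ih, geom_sum_succ]
      show (1 + gy k p m) ^ lam * _ + gx k p m = _
      ring
  have hsq2 : (s (p ^ m)).2 = 0 := by rw [hy _ hq1, hu, sub_self]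
  have hsq1 : (s (p ^ m)).1
      = gx k p m * ∑ i ∈ Finset.range (p ^ m), (1 + gy k p m) ^ (lam * i) := by
    rw [hx _ hq1]
    simp_rw [← pow_mul]
  constructor
  · intro h0
    by_contra hdvd
    have hcop : Nat.Coprime lam (p ^ m) :=
      Nat.Coprime.pow_right _ (((Nat.Prime.coprime_iff_not_dvd hp).2 hdvd).symm)
    have hre := aux2 (1 + gy k p m) (p ^ m) lam (by positivity) hu hcop
    have hsum : ∑ i ∈ Finset.range (p ^ m), (1 + gy k p m) ^ i
        = gy k p m ^ (p ^ m - 1) := by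
      have h3 := congrArg (gmk k p m) (aux3 k p hp m)
      rw [map_sum] at h3
      simp_rw [map_pow, map_add, map_one] at h3
      rw [gy_eq]
      exact h3
    have hcontr : (s (p ^ m)).1 = gx k p m * gy k p m ^ (p ^ m - 1) := by
      rw [hsq1, hre, hsum]
    rw [h0] at hcontr
    refine aux4 k p m hp ?_
    rw [← hcontr]
  · intro hdvd
    obtain ⟨c, hc⟩ := hdvd
    have hm1 : p ^ m = p * p ^ (m - 1) := by
      rw [← pow_succ']
      congr 1
      omega
    have ht : ((1 + gy k p m) ^ lam) ^ (p ^ (m - 1)) = 1 := by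
      rw [← pow_mul, hc]
      have he : p * c * p ^ (m - 1) = p ^ m * c := by rw [hm1]; ring
      rw [he, pow_mul, hu, one_pow]
    have hsum0 : ∑ i ∈ Finset.range (p ^ m), ((1 + gy k p m) ^ lam) ^ i = 0 := by
      have haux := aux1 ((1 + gy k p m) ^ lam) (p ^ (m - 1)) ht p
      rw [← hm1] at haux
      rw [haux, hp0, zero_mul]
    have h1' : (s (p ^ m)).1 = 0 := by rw [hx _ hq1, hsum0, mul_zero]
    rw [Prod.ext_iff]
    exact ⟨by simpa using h1', by simpa using hsq2⟩
end

section
/- Let p be a prime, k a field of characteristic p, m a positive integer, and λ a natural number. Let A = k[x,y]/(x^p, y^{p^m}). Then: (a) there is a unique k-algebra homomorphism Δ : A → A ⊗_k A with Δ(x) = (1+y)^λ ⊗ x + x ⊗ 1 and Δ(y) = y⊗1 + 1⊗y + y⊗y; (b) there is a unique k-algebra homomorphism ε : A → k with ε(x) = ε(y) = 0; (c) there is a unique k-algebra homomorphism S : A → A with S(x) = −(1+y)^{−λ} x and S(y) = (1+y)^{−1} − 1, where (1+y) is a unit of A; and (Δ, ε, S) satisfy coassociativity, the counit axioms, and the antipode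 axioms, making A a Hopf algebra over k. (This is the Hopf algebra of the group scheme G_λ = α_p ⋊_λ μ_{p^m}.) -/
open MvPolynomial TensorProduct

section Aux

variable (k : Type*) [CommRing k] (p m : ℕ)

lemma gx_pow : gx k p m ^ p = 0 := by
  rw [gx, ← map_pow, Ideal.Quotient.eq_zero_iff_mem]
  exact Ideal.subset_span (Set.mem_insert _ _)

lemma gy_pow : gy k p m ^ (p ^ m) = 0 := by
  rw [gy, ← map_pow, Ideal.Quotient.eq_zero_iff_mem]
  exact Ideal.subset_span (Set.mem_insert_iff.mpr (Or.inr rfl))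

variable {B : Type*} [CommRing B] [Algebra k B]

/-- extensionality for algebra maps out of `Gring`. -/
lemma ghom_ext {C : Type*} [Semiring C] [Algebra k C] {f g : Gring k p m →ₐ[k] C}
    (h1 : f (gx k p m) = g (gx k p m)) (h2 : f (gy k p m) = g (gy k p m)) : f = g := by
  apply Ideal.Quotient.algHom_ext
  apply MvPolynomial.algHom_ext
  intro i
  fin_cases i
  · simpa [Ideal.Quotient.mkₐ_eq_mk, gx] using h1
  · simpa [Ideal.Quotient.mkₐ_eq_mk, gy] using h2

/-- universal lift. -/
noncomputable def glift (a b : B) (ha : a ^ p = 0) (hb : b ^ (p ^ m) = 0) :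
    Gring k p m →ₐ[k] B :=
  Ideal.Quotient.liftₐ _ (aeval ![a, b]) (by
    intro q hq
    have hle : Ideal.span {(X 0 : MvPolynomial (Fin 2) k) ^ p,
        (X 1 : MvPolynomial (Fin 2) k) ^ (p ^ m)} ≤
        RingHom.ker (aeval ![a, b] : MvPolynomial (Fin 2) k →ₐ[k] B) := by
      rw [Ideal.span_le]
      rintro r hr
      simp only [Set.mem_insert_iff, Set.mem_singleton_iff] at hr
      rcases hr with rfl | rfl <;>
        simp [RingHom.mem_ker, map_pow, ha, hb]
    exact hle hq)

@[simp] lemma glift_gx (a b : B) (ha : a ^ p = 0) (hb : b ^ (p ^ m) = 0) :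
    glift k p m a b ha hb (gx k p m) = a := by
  simp [glift, gx]
  exact (Ideal.Quotient.lift_mk _ _ _).trans (by simp)

@[simp] lemma glift_gy (a b : B) (ha : a ^ p = 0) (hb : b ^ (p ^ m) = 0) :
    glift k p m a b ha hb (gy k p m) = b := by
  simp [glift, gy]
  exact (Ideal.Quotient.lift_mk _ _ _).trans (by simp)


lemma glift_exu (k : Type*) [CommRing k] (p m : ℕ) {B : Type*} [CommRing B] [Algebra k B]
    (a b : B) (ha : a ^ p = 0) (hb : b ^ (p ^ m) = 0) :
    ∃! f : Gring k p m →ₐ[k] B, f (gx k p m) = a ∧ f (gy k p m) = b :=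
  ⟨glift k p m a b ha hb, ⟨glift_gx k p m a b ha hb, glift_gy k p m a b ha hb⟩,
    fun _ hf => ghom_ext k p m (hf.1.trans (glift_gx k p m a b ha hb).symm)
      (hf.2.trans (glift_gy k p m a b ha hb).symm)⟩

end Aux

set_option maxHeartbeats 2000000 in
set_option synthInstance.maxHeartbeats 400000 in
/-- The comultiplication `Δ`, counit `ε` and antipode `S` of the group
scheme `G_λ = α_p ⋊_λ μ_{p^m}` exist, are unique (as `k`-algebra homomorphisms with the
prescribed values on `x` and `y`, where `S(x) = -(1+y)^{-λ} x`, `S(y) = (1+y)^{-1} - 1`,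
the element `1+y` being a unit), and satisfy the Hopf algebra axioms
(coassociativity, counit, antipode), making `A = k[x,y]/(x^p, y^{p^m})` a Hopf
algebra over `k`. -/
theorem stmt5 (p : ℕ) (hp : p.Prime) (k : Type*) [Field k] [CharP k p]
    (m : ℕ) (hm : 1 ≤ m) (lam : ℕ) :
    -- (a) existence and uniqueness of the comultiplication
    (∃! Δ : Gring k p m →ₐ[k] Gring k p m ⊗[k] Gring k p m,
      Δ (gx k p m) = ((1 + gy k p m) ^ lam) ⊗ₜ[k] gx k p m + gx k p m ⊗ₜ[k] 1 ∧
      Δ (gy k p m) = gy k p m ⊗ₜ[k] 1 + 1 ⊗ₜ[k] gy k p m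
        + gy k p m ⊗ₜ[k] gy k p m) ∧
    -- (b) existence and uniqueness of the counit
    (∃! ε : Gring k p m →ₐ[k] k, ε (gx k p m) = 0 ∧ ε (gy k p m) = 0) ∧
    -- (c) `1 + y` is a unit, and the antipode exists and is unique
    IsUnit (1 + gy k p m) ∧
    (∀ u : (Gring k p m)ˣ, (u : Gring k p m) = 1 + gy k p m →
      (∃! S : Gring k p m →ₐ[k] Gring k p m,
        S (gx k p m) = -(((u⁻¹ : (Gring k p m)ˣ) : Gring k p m) ^ lam * gx k p m) ∧
        S (gy k p m) = ((u⁻¹ : (Gring k p m)ˣ) : Gring k p m) - 1)) ∧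
    -- the Hopf algebra axioms hold for the maps so determined
    (∀ (u : (Gring k p m)ˣ) (Δ : Gring k p m →ₐ[k] Gring k p m ⊗[k] Gring k p m)
      (ε : Gring k p m →ₐ[k] k) (S : Gring k p m →ₐ[k] Gring k p m),
      (u : Gring k p m) = 1 + gy k p m →
      Δ (gx k p m) = ((1 + gy k p m) ^ lam) ⊗ₜ[k] gx k p m + gx k p m ⊗ₜ[k] 1 →
      Δ (gy k p m) = gy k p m ⊗ₜ[k] 1 + 1 ⊗ₜ[k] gy k p m
        + gy k p m ⊗ₜ[k] gy k p m →
      ε (gx k p m) = 0 → ε (gy k p m) = 0 →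
      S (gx k p m) = -(((u⁻¹ : (Gring k p m)ˣ) : Gring k p m) ^ lam * gx k p m) →
      S (gy k p m) = ((u⁻¹ : (Gring k p m)ˣ) : Gring k p m) - 1 →
      -- coassociativity
      ((Algebra.TensorProduct.assoc k k k (Gring k p m) (Gring k p m)
          (Gring k p m)).toAlgHom.comp
        ((Algebra.TensorProduct.map Δ (AlgHom.id k (Gring k p m))).comp Δ) =
          (Algebra.TensorProduct.map (AlgHom.id k (Gring k p m)) Δ).comp Δ) ∧
      -- counit axioms
      ((Algebra.TensorProduct.lid k (Gring k p m)).toAlgHom.comp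
        ((Algebra.TensorProduct.map ε (AlgHom.id k (Gring k p m))).comp Δ) =
          AlgHom.id k (Gring k p m)) ∧
      ((Algebra.TensorProduct.rid k k (Gring k p m)).toAlgHom.comp
        ((Algebra.TensorProduct.map (AlgHom.id k (Gring k p m)) ε).comp Δ) =
          AlgHom.id k (Gring k p m)) ∧
      -- antipode axioms
      ((Algebra.TensorProduct.lmul' k).comp
        ((Algebra.TensorProduct.map S (AlgHom.id k (Gring k p m))).comp Δ) =
          (Algebra.ofId k (Gring k p m)).comp ε) ∧
      ((Algebra.TensorProduct.lmul' k).comp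
        ((Algebra.TensorProduct.map (AlgHom.id k (Gring k p m)) S).comp Δ) =
          (Algebra.ofId k (Gring k p m)).comp ε)) := by
  haveI : Fact p.Prime := ⟨hp⟩
  set x := gx k p m with hxdef
  set y := gy k p m with hydef
  have hx : x ^ p = 0 := gx_pow k p m
  have hy : y ^ (p ^ m) = 0 := gy_pow k p m
  have hp0 : p ≠ 0 := hp.ne_zero
  have hpm0 : p ^ m ≠ 0 := pow_ne_zero _ hp0
  -- the counit
  have ε₀ : Gring k p m →ₐ[k] k := glift k p m 0 0 (zero_pow hp0) (zero_pow hpm0)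
  haveI : Nontrivial (Gring k p m) := ε₀.toRingHom.domain_nontrivial
  haveI : CharP (Gring k p m) p := charP_of_injective_algebraMap (algebraMap k (Gring k p m)).injective p
  have εT : Gring k p m ⊗[k] Gring k p m →ₐ[k] k :=
    (Algebra.TensorProduct.lmul' k).comp (Algebra.TensorProduct.map ε₀ ε₀)
  haveI : Nontrivial (Gring k p m ⊗[k] Gring k p m) := εT.toRingHom.domain_nontrivial
  haveI : CharP (Gring k p m ⊗[k] Gring k p m) p := charP_of_injective_algebraMap (algebraMap k _).injective p
  -- key identity
  have hw : (1 + y) ^ (p ^ m) = 1 := by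
    rw [add_pow_char_pow (p := p) (n := m) 1 y, one_pow, hy, add_zero]
  have hunit : IsUnit (1 + y) := by
    refine IsUnit.of_mul_eq_one ((1 + y) ^ (p ^ m - 1)) ?_
    rw [← pow_succ', Nat.sub_add_cancel (Nat.one_le_iff_ne_zero.mpr hpm0), hw]
  -- Δ existence
  have hΔx' : (((1 + y) ^ lam) ⊗ₜ[k] x + x ⊗ₜ[k] (1 : Gring k p m)) ^ p = 0 := by
    rw [add_pow_char (R := Gring k p m ⊗[k] Gring k p m) (p := p), Algebra.TensorProduct.tmul_pow, Algebra.TensorProduct.tmul_pow,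
      hx, one_pow, tmul_zero, zero_tmul, add_zero]
  have hyy : (y ⊗ₜ[k] (1 : Gring k p m) + (1 : Gring k p m) ⊗ₜ[k] y + y ⊗ₜ[k] y)
      = (1 + y) ⊗ₜ[k] (1 + y) - 1 := by
    simp only [tmul_add, add_tmul, Algebra.TensorProduct.one_def]
    abel
  have hΔy' : (y ⊗ₜ[k] (1 : Gring k p m) + (1 : Gring k p m) ⊗ₜ[k] y + y ⊗ₜ[k] y) ^ (p ^ m) = 0 := by
    rw [hyy, sub_pow_char_pow (R := Gring k p m ⊗[k] Gring k p m) (p := p), Algebra.TensorProduct.tmul_pow, hw]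
    simp [Algebra.TensorProduct.one_def]
  refine ⟨glift_exu k p m (B := Gring k p m ⊗[k] Gring k p m) _ _ hΔx' hΔy',
    glift_exu k p m (B := k) (0 : k) 0 (zero_pow hp0) (zero_pow hpm0), hunit, ?_, ?_⟩
  · -- antipode existence/uniqueness
    intro u hu
    have hupow : (u : Gring k p m) ^ (p ^ m) = 1 := by rw [hu, hw]
    have huinv : ((u⁻¹ : (Gring k p m)ˣ) : Gring k p m) ^ (p ^ m) = 1 := by
      have h1 : (u ^ (p ^ m)) = 1 := Units.ext (by simpa using hupow)
      rw [← Units.val_pow_eq_pow_val, inv_pow, h1, inv_one, Units.val_one]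
    have hSx' : (-(((u⁻¹ : (Gring k p m)ˣ) : Gring k p m) ^ lam * x)) ^ p = 0 := by
      have h1 : (-(((u⁻¹ : (Gring k p m)ˣ) : Gring k p m) ^ lam * x))
          = (-1) * (((u⁻¹ : (Gring k p m)ˣ) : Gring k p m) ^ lam * x) := by ring
      rw [h1, mul_pow, mul_pow, hx, mul_zero, mul_zero]
    have hSy' : (((u⁻¹ : (Gring k p m)ˣ) : Gring k p m) - 1) ^ (p ^ m) = 0 := by
      rw [sub_pow_char_pow (R := Gring k p m) (p := p), huinv, one_pow, sub_self]
    exact glift_exu k p m (B := Gring k p m) _ _ hSx' hSy'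
  · -- the Hopf axioms
    intro u Δ ε S hu hΔx hΔy hεx hεy hSx hSy
    haveI : MonoidHomClass (Gring k p m →ₐ[k] Gring k p m ⊗[k] Gring k p m) (Gring k p m)
        (Gring k p m ⊗[k] Gring k p m) := RingHomClass.toMonoidHomClass
    have hΔw : Δ (1 + y) = (1 + y) ⊗ₜ[k] (1 + y) := by
      rw [map_add, map_one, hΔy, Algebra.TensorProduct.one_def]
      simp only [tmul_add, add_tmul]
      abel
    have hΔwl : Δ ((1 + y) ^ lam) = ((1 + y) ^ lam) ⊗ₜ[k] ((1 + y) ^ lam) := by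
      rw [map_pow, hΔw, Algebra.TensorProduct.tmul_pow]
    have hεw : ε (1 + y) = 1 := by rw [map_add, map_one, hεy, add_zero]
    have hεwl : ε ((1 + y) ^ lam) = 1 := by rw [map_pow, hεw, one_pow]
    have hSw : S (1 + y) = ((u⁻¹ : (Gring k p m)ˣ) : Gring k p m) := by
      rw [map_add, map_one, hSy]; ring
    have hSwl : S ((1 + y) ^ lam) = ((u⁻¹ : (Gring k p m)ˣ) : Gring k p m) ^ lam := by
      rw [map_pow, hSw]
    have huu : ((u⁻¹ : (Gring k p m)ˣ) : Gring k p m) * (1 + y) = 1 := by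
      rw [← hu, Units.inv_mul]
    have huu' : (1 + y) * ((u⁻¹ : (Gring k p m)ˣ) : Gring k p m) = 1 := by
      rw [← hu, Units.mul_inv]
    refine ⟨?_, ?_, ?_, ?_, ?_⟩
    · -- coassociativity
      refine ghom_ext k p m ?_ ?_
      · simp only [AlgHom.coe_comp, AlgEquiv.toAlgHom_eq_coe, AlgHom.coe_coe,
          Function.comp_apply, ← hxdef, hΔx, map_add, Algebra.TensorProduct.map_tmul,
          AlgHom.coe_id, id_eq, hΔwl, map_one, add_tmul, tmul_add,
          Algebra.TensorProduct.assoc_tmul, AlgHom.id_apply]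
        try abel
      · simp only [AlgHom.coe_comp, AlgEquiv.toAlgHom_eq_coe, AlgHom.coe_coe,
          Function.comp_apply, ← hydef, hΔy, map_add, Algebra.TensorProduct.map_tmul,
          AlgHom.coe_id, id_eq, map_one, add_tmul, tmul_add,
          Algebra.TensorProduct.one_def,
          Algebra.TensorProduct.assoc_tmul, AlgHom.id_apply]
        simp only [Algebra.TensorProduct.assoc_tmul, AlgEquiv.coe_toAlgHom]
        try abel
    · refine ghom_ext k p m (C := Gring k p m) ?_ ?_
      · simp [← hxdef, hΔx, hεx, hεwl, Algebra.TensorProduct.lid_tmul]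
      · simp [← hydef, hΔy, hεy, Algebra.TensorProduct.lid_tmul]
    · refine ghom_ext k p m (C := Gring k p m) ?_ ?_
      · simp [← hxdef, hΔx, hεx, Algebra.TensorProduct.rid_tmul]
      · simp [← hydef, hΔy, hεy, Algebra.TensorProduct.rid_tmul]
    · refine ghom_ext k p m (C := Gring k p m) ?_ ?_
      · simp only [AlgHom.coe_comp, Function.comp_apply, ← hxdef, hΔx, map_add,
          Algebra.TensorProduct.map_tmul, AlgHom.coe_id, id_eq, hSwl, hSx,
          Algebra.TensorProduct.lmul'_apply_tmul, map_one, AlgHom.id_apply,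
          Algebra.ofId_apply, hεx, map_zero]
        ring
      · simp only [AlgHom.coe_comp, Function.comp_apply, ← hydef, hΔy, map_add,
          Algebra.TensorProduct.map_tmul, AlgHom.coe_id, id_eq, hSy, map_one,
          Algebra.TensorProduct.lmul'_apply_tmul, AlgHom.id_apply,
          Algebra.ofId_apply, hεy, map_zero]
        linear_combination huu
    · refine ghom_ext k p m (C := Gring k p m) ?_ ?_
      · simp only [AlgHom.coe_comp, Function.comp_apply, ← hxdef, hΔx, map_add,
          Algebra.TensorProduct.map_tmul, AlgHom.coe_id, id_eq, hSx, map_one,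
          Algebra.TensorProduct.lmul'_apply_tmul, AlgHom.id_apply,
          Algebra.ofId_apply, hεx, map_zero]
        have : ((1 + y) ^ lam) * (((u⁻¹ : (Gring k p m)ˣ) : Gring k p m) ^ lam) = 1 := by
          rw [← mul_pow, huu', one_pow]
        linear_combination (-x) * this
      · simp only [AlgHom.coe_comp, Function.comp_apply, ← hydef, hΔy, map_add,
          Algebra.TensorProduct.map_tmul, AlgHom.coe_id, id_eq, hSy, map_one,
          Algebra.TensorProduct.lmul'_apply_tmul, AlgHom.id_apply,
          Algebra.ofId_apply, hεy, map_zero]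
        linear_combination huu
end

section
/- Let p be a prime, k a field of characteristic p, m a positive integer, and λ an integer with 1 ≤ λ ≤ p^m − 1. Let A = k[x,y]/(x^p, y^{p^m}). Then in A ⊗_k A one has (1+y)^λ ⊗ x + x ⊗ 1 ≠ 1 ⊗ x + x ⊗ (1+y)^λ. (Hence the comultiplication of G_λ is not cocommutative, i.e., the group scheme G_λ is non-commutative.) -/
set_option synthInstance.maxHeartbeats 1000000
set_option maxHeartbeats 1000000


open MvPolynomial TensorProduct

section aux
variable (k : Type*) [Field k] (p m : ℕ)

noncomputable abbrev Cring : Type _ :=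
  Polynomial k ⧸ Ideal.span {(Polynomial.X : Polynomial k) ^ (p ^ m)}

noncomputable abbrev Dring : Type _ := DualNumber (Cring k p m)

noncomputable def uC : Cring k p m := Ideal.Quotient.mk _ Polynomial.X

lemma uC_pow : uC k p m ^ (p ^ m) = 0 := by
  rw [uC, ← map_pow, Ideal.Quotient.eq_zero_iff_mem]
  exact Ideal.subset_span rfl

lemma eps_pow (hp : 2 ≤ p) : (DualNumber.eps : Dring k p m) ^ p = 0 := by
  have h2 : (DualNumber.eps : Dring k p m) ^ 2 = 0 := by
    rw [sq, DualNumber.eps_mul_eps]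
  calc (DualNumber.eps : Dring k p m) ^ p
      = DualNumber.eps ^ 2 * DualNumber.eps ^ (p - 2) := by
        rw [← pow_add]; congr 1; omega
    _ = 0 := by rw [h2, zero_mul]

noncomputable def fmap (hp : 2 ≤ p) : Gring k p m →ₐ[k] Dring k p m := by
  refine Ideal.Quotient.liftₐ _
    (aeval (fun i : Fin 2 => if i = 0 then 0 else
      (TrivSqZeroExt.inl (uC k p m) : Dring k p m))) ?_
  intro a ha
  induction ha using Submodule.span_induction with
  | mem q hq =>
    rcases hq with rfl | rfl
    · simp only [map_pow, aeval_X, if_pos rfl]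
      exact zero_pow (by omega)
    · simp only [map_pow, aeval_X]
      rw [if_neg (by decide), TrivSqZeroExt.inl_pow, uC_pow, TrivSqZeroExt.inl_zero]
  | zero => exact map_zero _
  | add x y _ _ hx hy => rw [map_add, hx, hy, add_zero]
  | smul r x _ hx => rw [smul_eq_mul, map_mul, hx, mul_zero]

noncomputable def gmap (hp : 2 ≤ p) : Gring k p m →ₐ[k] Dring k p m := by
  refine Ideal.Quotient.liftₐ _
    (aeval (fun i : Fin 2 => if i = 0 then (DualNumber.eps : Dring k p m) else 0)) ?_
  intro a ha
  induction ha using Submodule.span_induction with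
  | mem q hq =>
    rcases hq with rfl | rfl
    · simp only [map_pow, aeval_X, if_pos rfl]
      exact eps_pow k p m hp
    · simp only [map_pow, aeval_X]
      rw [if_neg (by decide)]
      exact zero_pow (pow_pos (show 0 < p by omega) m).ne'
  | zero => exact map_zero _
  | add x y _ _ hx hy => rw [map_add, hx, hy, add_zero]
  | smul r x _ hx => rw [smul_eq_mul, map_mul, hx, mul_zero]

lemma fmap_gx (hp : 2 ≤ p) : fmap k p m hp (gx k p m) = 0 := by
  simp [fmap, gx, Ideal.Quotient.liftₐ_apply, Ideal.Quotient.lift_mk]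
  erw [Ideal.Quotient.lift_mk]
  simp

lemma fmap_gy (hp : 2 ≤ p) :
    fmap k p m hp (gy k p m) = TrivSqZeroExt.inl (uC k p m) := by
  simp [fmap, gy, Ideal.Quotient.liftₐ_apply, Ideal.Quotient.lift_mk]
  erw [Ideal.Quotient.lift_mk]
  simp

lemma gmap_gx (hp : 2 ≤ p) : gmap k p m hp (gx k p m) = DualNumber.eps := by
  simp [gmap, gx, Ideal.Quotient.liftₐ_apply, Ideal.Quotient.lift_mk]
  erw [Ideal.Quotient.lift_mk]
  simp

lemma gmap_gy (hp : 2 ≤ p) : gmap k p m hp (gy k p m) = 0 := by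
  simp [gmap, gy, Ideal.Quotient.liftₐ_apply, Ideal.Quotient.lift_mk]
  erw [Ideal.Quotient.lift_mk]
  simp

end aux



/-- In `A ⊗_k A`, one has
`(1+y)^λ ⊗ x + x ⊗ 1 ≠ 1 ⊗ x + x ⊗ (1+y)^λ`: the comultiplication of `G_λ` is not
cocommutative, i.e. the group scheme `G_λ` is non-commutative. -/
theorem stmt6 (p : ℕ) (hp : p.Prime) (k : Type*) [Field k] [CharP k p]
    (m : ℕ) (hm : 1 ≤ m) (lam : ℕ) (hl1 : 1 ≤ lam) (hl2 : lam ≤ p ^ m - 1) :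
    (((1 + gy k p m) ^ lam) ⊗ₜ[k] gx k p m + gx k p m ⊗ₜ[k] 1
        : Gring k p m ⊗[k] Gring k p m) ≠
      1 ⊗ₜ[k] gx k p m + gx k p m ⊗ₜ[k] ((1 + gy k p m) ^ lam) := by
  have hp2 : 2 ≤ p := hp.two_le
  intro h
  set Φ := Algebra.TensorProduct.lift (fmap k p m hp2) (gmap k p m hp2)
    (fun a b => Commute.all (fmap k p m hp2 a) (gmap k p m hp2 b)) with hΦ
  have h2 := congrArg Φ h
  simp only [map_add, hΦ, Algebra.TensorProduct.lift_tmul, map_pow, map_add, map_one,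
    fmap_gx, fmap_gy, gmap_gx, gmap_gy] at h2
  -- simplify both sides
  have hL : ((1 : Dring k p m) + TrivSqZeroExt.inl (uC k p m)) ^ lam * DualNumber.eps
      = TrivSqZeroExt.inr ((1 + uC k p m) ^ lam) := by
    rw [← TrivSqZeroExt.inl_one, ← TrivSqZeroExt.inl_add, TrivSqZeroExt.inl_pow,
      DualNumber.eps, TrivSqZeroExt.inl_mul_inr, smul_eq_mul, mul_one]
  rw [hL] at h2
  simp only [zero_mul, one_mul, add_zero, DualNumber.eps] at h2
  have h3 : (1 + uC k p m) ^ lam = 1 := by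
    have := congrArg TrivSqZeroExt.snd h2
    simpa using this
  -- now derive a contradiction in Cring
  have h4 : ((1 + Polynomial.X : Polynomial k) ^ lam - 1) ∈
      Ideal.span {(Polynomial.X : Polynomial k) ^ (p ^ m)} := by
    rw [← Ideal.Quotient.eq_zero_iff_mem]
    rw [map_sub, map_pow, map_add, map_one]
    rw [show (Ideal.Quotient.mk _ Polynomial.X : Cring k p m) = uC k p m from rfl, h3]
    ring
  rw [Ideal.mem_span_singleton] at h4
  set q : Polynomial k := (1 + Polynomial.X) ^ lam - 1 with hq
  have hdeg1 : ((1 + Polynomial.X : Polynomial k) ^ lam).natDegree = lam := by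
    rw [add_comm, ← Polynomial.C_1, Polynomial.natDegree_pow,
      Polynomial.natDegree_X_add_C, mul_one]
  have hq0 : q ≠ 0 := by
    intro h0
    have he : ((1 + Polynomial.X : Polynomial k) ^ lam) = 1 := by
      rwa [hq, sub_eq_zero] at h0
    rw [he, Polynomial.natDegree_one] at hdeg1
    omega
  have hdeg2 : q.natDegree ≤ lam := by
    refine le_trans (Polynomial.natDegree_sub_le _ _) ?_
    simp [hdeg1]
  have h5 := Polynomial.natDegree_le_of_dvd h4 hq0
  rw [Polynomial.natDegree_X_pow] at h5
  have h6 : 0 < p ^ m := pow_pos (by omega) m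
  omega
end

section
/- Let p be a prime and R a commutative ring, and let π, γ ∈ R satisfy π·γ = p in R. Suppose f ∈ R[X] is a polynomial of degree at most p−1 such that π · ( γ·W_p(X,Y) − f(X+Y) + f(X) + f(Y) ) = 0 in R[X,Y]. Then p = 0 in R. (This is the key step showing that every deformation of G_λ lives in characteristic p: comparing coefficients of the monomial X^{p−1}Y forces π·γ = 0.) -/
open MvPolynomial

/-- Let `π·γ = p` in a commutative ring `R`, let `W_p ∈ ℤ[X,Y]` be the
unique polynomial with `p·W_p = (X+Y)^p - X^p - Y^p`, and let `f ∈ R[X]` be a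
polynomial of degree at most `p-1` such that
`π·(γ·W_p(X,Y) - f(X+Y) + f(X) + f(Y)) = 0` in `R[X,Y]`. Then `p = 0` in `R`. -/
theorem stmt7 (p : ℕ) (hp : p.Prime) (R : Type*) [CommRing R]
    (pi gam : R) (hpg : pi * gam = (p : R))
    (W : MvPolynomial (Fin 2) ℤ)
    (hW : (p : MvPolynomial (Fin 2) ℤ) * W =
      (X 0 + X 1) ^ p - X 0 ^ p - X 1 ^ p)
    (f : Polynomial R) (hf : f.degree ≤ (p - 1 : ℕ))
    (h : (C pi : MvPolynomial (Fin 2) R) *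
      (C gam * MvPolynomial.map (Int.castRingHom R) W
        - Polynomial.aeval (X 0 + X 1 : MvPolynomial (Fin 2) R) f
        + Polynomial.aeval (X 0 : MvPolynomial (Fin 2) R) f
        + Polynomial.aeval (X 1 : MvPolynomial (Fin 2) R) f) = 0) :
    (p : R) = 0 := by
  classical
  have hp1 : 1 ≤ p := hp.one_lt.le.trans' (by norm_num)
  have hp2 : 2 ≤ p := hp.two_le
  set m : Fin 2 →₀ ℕ := Finsupp.single 0 (p - 1) + Finsupp.single 1 1 with hm
  have hm0 : m 0 = p - 1 := by simp [hm]
  have hm1 : m 1 = 1 := by simp [hm]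
  -- sum of exponents of m is p
  have hsum : ∑ i ∈ m.support, m i = p := by
    rw [Finset.sum_subset (Finset.subset_univ m.support)
      (fun x _ hx => Finsupp.notMem_support_iff.mp hx), Fin.sum_univ_two, hm0, hm1]
    omega
  -- coefficient of m in f(x) for any x of total degree ≤ 1
  have hfn : f.natDegree < p := by
    have := Polynomial.natDegree_le_iff_degree_le.mpr hf
    omega
  have haev : ∀ x : MvPolynomial (Fin 2) R, x.totalDegree ≤ 1 →
      coeff m (Polynomial.aeval x f) = 0 := by
    intro x hx
    rw [Polynomial.aeval_eq_sum_range' hfn, coeff_sum]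
    refine Finset.sum_eq_zero fun i hi => ?_
    rw [coeff_smul]
    have hi' : i < p := Finset.mem_range.mp hi
    have : (x ^ i).totalDegree < ∑ j ∈ m.support, m j := by
      rw [hsum]
      calc (x ^ i).totalDegree ≤ i * x.totalDegree := totalDegree_pow x i
        _ ≤ i * 1 := Nat.mul_le_mul_left i hx
        _ < p := by omega
    rw [coeff_eq_zero_of_totalDegree_lt this, smul_zero]
  -- coefficient of m in f(X i) is 0
  have haevX : ∀ j : Fin 2, coeff m (Polynomial.aeval (X j : MvPolynomial (Fin 2) R) f) = 0 := by
    intro j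
    rw [Polynomial.aeval_eq_sum_range' hfn, coeff_sum]
    refine Finset.sum_eq_zero fun i _ => ?_
    rw [coeff_smul, coeff_X_pow]
    have : Finsupp.single j i ≠ m := by
      intro he
      fin_cases j
      · have := DFunLike.congr_fun he 1
        simp [hm1] at this
      · have := DFunLike.congr_fun he 0
        simp [hm0] at this
        omega
    rw [if_neg this, smul_zero]
  -- coefficient of m in W is 1
  have hWm : coeff m W = 1 := by
    have hcast : (p : MvPolynomial (Fin 2) ℤ) = C (p : ℤ) := by simp
    have h1 := congrArg (coeff m) hW
    rw [hcast, coeff_C_mul, coeff_sub, coeff_sub] at h1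
    have hX0 : coeff m (X 0 ^ p : MvPolynomial (Fin 2) ℤ) = 0 := by
      rw [coeff_X_pow, if_neg]
      intro he
      have := DFunLike.congr_fun he 1
      simp [hm1] at this
    have hX1 : coeff m (X 1 ^ p : MvPolynomial (Fin 2) ℤ) = 0 := by
      rw [coeff_X_pow, if_neg]
      intro he
      have := DFunLike.congr_fun he 0
      simp [hm0] at this
      omega
    have hadd : coeff m ((X 0 + X 1 : MvPolynomial (Fin 2) ℤ) ^ p) = (p : ℤ) := by
      rw [add_pow, coeff_sum]
      have hterm : ∀ k ∈ Finset.range (p + 1),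
          coeff m ((X 0 : MvPolynomial (Fin 2) ℤ) ^ k * X 1 ^ (p - k) * (p.choose k : MvPolynomial (Fin 2) ℤ))
            = if k = p - 1 then (p.choose k : ℤ) else 0 := by
        intro k hk
        have hk' : k ≤ p := by have := Finset.mem_range.mp hk; omega
        rw [X_pow_eq_monomial, X_pow_eq_monomial, monomial_mul,
          show ((p.choose k : MvPolynomial (Fin 2) ℤ)) = C (p.choose k : ℤ) by simp,
          mul_comm _ (C _), C_mul_monomial, coeff_monomial]
        have hiff : (Finsupp.single (0 : Fin 2) k + Finsupp.single 1 (p - k) = m) ↔ k = p - 1 := by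
          constructor
          · intro he
            have := DFunLike.congr_fun he 0
            simpa [hm0, Finsupp.single_apply] using this
          · intro he
            subst he
            rw [hm]
            have hpk : p - (p - 1) = 1 := by omega
            rw [hpk]
        simp only [hiff, mul_one, one_mul]
      rw [Finset.sum_congr rfl hterm, Finset.sum_ite_eq' (Finset.range (p + 1)) (p - 1)
        (fun k => (p.choose k : ℤ)), if_pos (by simp)]
      have hch : p.choose (p - 1) = p := by
        rw [Nat.choose_symm hp1, Nat.choose_one_right]
      rw [hch]
    rw [hadd, hX0, hX1, sub_zero, sub_zero] at h1
    have hpz : (p : ℤ) ≠ 0 := by exact_mod_cast hp.ne_zero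
    have := mul_left_cancel₀ hpz (h1.trans (mul_one (p : ℤ)).symm)
    exact this
  -- now extract coefficient m from h
  have hX01 : (X 0 + X 1 : MvPolynomial (Fin 2) R).totalDegree ≤ 1 := by
    refine (totalDegree_add _ _).trans ?_
    have hb : ∀ j : Fin 2, (X j : MvPolynomial (Fin 2) R).totalDegree ≤ 1 := by
      intro j
      rw [X]
      simpa using totalDegree_monomial_le (Finsupp.single j 1) (1 : R)
    exact max_le (hb 0) (hb 1)
  have hc := congrArg (coeff m) h
  rw [coeff_zero, coeff_C_mul, coeff_add, coeff_add, coeff_sub, coeff_C_mul,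
    coeff_map, hWm, haev _ hX01, haevX 0, haevX 1] at hc
  simp only [map_one, mul_one, sub_zero, add_zero] at hc
  rw [← hpg]
  exact hc
end

section
/- Let p be a prime, k a field of characteristic p, m a positive integer, and λ an integer with 1 ≤ λ ≤ p^m − 1. Let g ∈ k[x,y] with deg_x(g) < p and deg_y(g) < p^m, and suppose that in k[x,y,x',y'] one has g((1+y)^λ x' + x, y + y' + y·y') ≡ g(x,y) + g(x',y') modulo the ideal (x^p, y^{p^m}, x'^p, y'^{p^m}). Then g = 0. (Equivalently, every homomorphism of k-group schemes from G_λ to the additive group is trivial; this is the trivial-action component of the vanishing H^1(G_λ, V̄) = 0.) -/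
open MvPolynomial

section Helpers

variable {k : Type*} [Field k]

lemma myDegreeOf_aeval_le {n : ℕ} {τ : Type*} (f : Fin n → MvPolynomial τ k)
    (g : MvPolynomial (Fin n) k) (i : τ) :
    degreeOf i (aeval f g) ≤ ∑ j, degreeOf j g * degreeOf i (f j) := by
  conv_lhs => rw [g.as_sum]
  rw [map_sum]
  refine (degreeOf_sum_le _ _ _).trans (Finset.sup_le fun s hs => ?_)
  rw [MvPolynomial.aeval_monomial]
  refine (degreeOf_mul_le _ _ _).trans ?_
  have h1 : degreeOf i ((algebraMap k (MvPolynomial τ k)) (coeff s g)) = 0 := degreeOf_C _ _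
  rw [h1, zero_add, Finsupp.prod]
  refine (degreeOf_prod_le _ _ _).trans ?_
  calc ∑ j ∈ s.support, degreeOf i (f j ^ s j)
      ≤ ∑ j ∈ s.support, s j * degreeOf i (f j) :=
        Finset.sum_le_sum fun j _ => degreeOf_pow_le _ _ _
    _ ≤ ∑ j, s j * degreeOf i (f j) :=
        Finset.sum_le_sum_of_subset (Finset.subset_univ _)
    _ ≤ ∑ j, degreeOf j g * degreeOf i (f j) :=
        Finset.sum_le_sum fun j _ =>
          Nat.mul_le_mul_right _ (monomial_le_degreeOf j hs)

lemma myNatDegree_aeval_le {n : ℕ} (f : Fin n → Polynomial k)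
    (g : MvPolynomial (Fin n) k) :
    (aeval f g).natDegree ≤ ∑ j, degreeOf j g * (f j).natDegree := by
  conv_lhs => rw [g.as_sum]
  rw [map_sum]
  refine Polynomial.natDegree_sum_le_of_forall_le _ _ fun s hs => ?_
  rw [MvPolynomial.aeval_monomial]
  refine (Polynomial.natDegree_mul_le).trans ?_
  have h1 : ((algebraMap k (Polynomial k)) (coeff s g)).natDegree = 0 := Polynomial.natDegree_C _
  rw [h1, zero_add, Finsupp.prod]
  refine (Polynomial.natDegree_prod_le _ _).trans ?_
  calc ∑ j ∈ s.support, (f j ^ s j).natDegree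
      ≤ ∑ j ∈ s.support, s j * (f j).natDegree :=
        Finset.sum_le_sum fun j _ => Polynomial.natDegree_pow_le
    _ ≤ ∑ j, s j * (f j).natDegree :=
        Finset.sum_le_sum_of_subset (Finset.subset_univ _)
    _ ≤ ∑ j, degreeOf j g * (f j).natDegree :=
        Finset.sum_le_sum fun j _ =>
          Nat.mul_le_mul_right _ (monomial_le_degreeOf j hs)

lemma myCoeff_mul_X_pow_eq_zero (μ : Fin 4 →₀ ℕ) (a : MvPolynomial (Fin 4) k)
    (j : Fin 4) (e : ℕ) (h : μ j < e) : coeff μ (a * X j ^ e) = 0 := by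
  rw [MvPolynomial.X_pow_eq_monomial, coeff_mul_monomial', if_neg]
  rw [Finsupp.single_le_iff]
  omega

lemma myLemA {p q : ℕ} (F : MvPolynomial (Fin 4) k)
    (hF : F ∈ Ideal.span {(X 0 : MvPolynomial (Fin 4) k) ^ p, X 1 ^ q, X 2 ^ p, X 3 ^ q})
    (h0 : degreeOf 0 F < p) (h1 : degreeOf 1 F < q) (h2 : degreeOf 2 F < p)
    (h3 : degreeOf 3 F < q) : F = 0 := by
  rw [show ({(X 0 : MvPolynomial (Fin 4) k) ^ p, X 1 ^ q, X 2 ^ p, X 3 ^ q} : Set _)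
      = insert ((X 0 : MvPolynomial (Fin 4) k) ^ p)
          (insert (X 1 ^ q) (insert (X 2 ^ p) {X 3 ^ q})) from rfl] at hF
  rw [Ideal.mem_span_insert] at hF
  obtain ⟨a0, z0, hz0, hF0⟩ := hF
  rw [Ideal.mem_span_insert] at hz0
  obtain ⟨a1, z1, hz1, hF1⟩ := hz0
  rw [Ideal.mem_span_insert] at hz1
  obtain ⟨a2, z2, hz2, hF2⟩ := hz1
  rw [Ideal.mem_span_singleton] at hz2
  obtain ⟨a3, hF3⟩ := hz2
  subst hF3 hF2 hF1
  rw [hF0] at h0 h1 h2 h3 ⊢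
  ext μ
  rw [MvPolynomial.coeff_zero]
  by_cases c0 : p ≤ μ 0
  · by_contra hne
    exact absurd (monomial_le_degreeOf 0 (mem_support_iff.mpr hne)) (by omega)
  by_cases c1 : q ≤ μ 1
  · by_contra hne
    exact absurd (monomial_le_degreeOf 1 (mem_support_iff.mpr hne)) (by omega)
  by_cases c2 : p ≤ μ 2
  · by_contra hne
    exact absurd (monomial_le_degreeOf 2 (mem_support_iff.mpr hne)) (by omega)
  by_cases c3 : q ≤ μ 3
  · by_contra hne
    exact absurd (monomial_le_degreeOf 3 (mem_support_iff.mpr hne)) (by omega)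
  rw [coeff_add, coeff_add, coeff_add, mul_comm (X 3 ^ q) a3]
  rw [myCoeff_mul_X_pow_eq_zero μ a0 0 p (by omega),
    myCoeff_mul_X_pow_eq_zero μ a1 1 q (by omega),
    myCoeff_mul_X_pow_eq_zero μ a2 2 p (by omega),
    myCoeff_mul_X_pow_eq_zero μ a3 3 q (by omega)]
  simp

lemma myAeval_pair {A B : Type*} [CommSemiring A] [CommSemiring B] [Algebra k A] [Algebra k B]
    (φ : A →ₐ[k] B) (a b : A) (g : MvPolynomial (Fin 2) k) :
    φ (aeval ![a, b] g) = aeval ![φ a, φ b] g := by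
  have h : (fun i => φ (![a, b] i)) = ![φ a, φ b] := by
    funext i; fin_cases i <;> simp
  rw [comp_aeval_apply, h]

lemma mySpec_mem {p q : ℕ} (hp : 0 < p) (hq : 0 < q) (F : MvPolynomial (Fin 4) k)
    (hF : F ∈ Ideal.span {(X 0 : MvPolynomial (Fin 4) k) ^ p, X 1 ^ q, X 2 ^ p, X 3 ^ q})
    (v : Fin 4 → MvPolynomial (Fin 4) k) (hv : ∀ i, v i = X i ∨ v i = 0) :
    aeval v F ∈ Ideal.span {(X 0 : MvPolynomial (Fin 4) k) ^ p, X 1 ^ q, X 2 ^ p, X 3 ^ q} := by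
  have h1 := Ideal.mem_map_of_mem (MvPolynomial.aeval v) hF
  rw [Ideal.map_span] at h1
  refine Ideal.span_le.mpr ?_ h1
  rintro _ ⟨x, hx, rfl⟩
  simp only [Set.mem_insert_iff, Set.mem_singleton_iff] at hx
  rcases hx with rfl | rfl | rfl | rfl <;>
  · rw [map_pow, MvPolynomial.aeval_X]
    rcases hv _ with h | h <;> rw [h]
    · exact Ideal.subset_span (by simp)
    · rw [zero_pow (by omega)]
      exact Ideal.zero_mem _

lemma myCoeff_scale (φ : Polynomial k) (c : k) (j : ℕ) :
    (Polynomial.aeval (Polynomial.C c * Polynomial.X) φ).coeff j = c ^ j * φ.coeff j := by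
  induction φ using Polynomial.induction_on' with
  | add p q hp hq => simp [hp, hq, mul_add]
  | monomial n a =>
    rw [Polynomial.aeval_monomial, mul_pow, ← Polynomial.C_pow]
    simp only [Polynomial.algebraMap_eq, ← Polynomial.C_mul, Polynomial.coeff_C_mul,
      Polynomial.coeff_X_pow, Polynomial.coeff_monomial]
    split_ifs with h1 h2 h3
    · subst h1; ring
    · exact absurd h1.symm h2
    · exact absurd h3.symm h1
    · ring

lemma myPair0 {A : Type*} [CommSemiring A] [Algebra k A] (g : MvPolynomial (Fin 2) k) (u : A) :
    MvPolynomial.aeval ![u, 0] g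
      = Polynomial.aeval u (MvPolynomial.aeval ![Polynomial.X, (0 : Polynomial k)] g) := by
  rw [comp_aeval_apply]
  have h : (fun i => Polynomial.aeval u (![Polynomial.X, (0 : Polynomial k)] i)) = ![u, (0 : A)] := by
    funext i; fin_cases i <;> simp
  rw [h]

lemma myPair1 {A : Type*} [CommSemiring A] [Algebra k A] (g : MvPolynomial (Fin 2) k) (u : A) :
    MvPolynomial.aeval ![0, u] g
      = Polynomial.aeval u (MvPolynomial.aeval ![(0 : Polynomial k), Polynomial.X] g) := by
  rw [comp_aeval_apply]
  have h : (fun i => Polynomial.aeval u (![(0 : Polynomial k), Polynomial.X] i)) = ![(0 : A), u] := by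
    funext i; fin_cases i <;> simp
  rw [h]

lemma myDegreeOf_one {τ : Type*} (i : τ) : degreeOf i (1 : MvPolynomial τ k) = 0 := by
  rw [← C_1, degreeOf_C]

lemma myDeg_sub3 {i : Fin 4} {a b c : MvPolynomial (Fin 4) k} {n : ℕ}
    (h1 : degreeOf i a ≤ n) (h2 : degreeOf i b ≤ n) (h3 : degreeOf i c ≤ n) :
    degreeOf i (a - b - c) ≤ n :=
  (degreeOf_sub_le _ _ _).trans
    (max_le ((degreeOf_sub_le _ _ _).trans (max_le h1 h2)) h3)

end Helpers

/-- Every 1-cocycle of `G_λ` with values in `G_a` (trivial action) is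
trivial: if `g ∈ k[x,y]` with `deg_x g < p`, `deg_y g < p^m` satisfies
`g((1+y)^λ x' + x, y + y' + y·y') ≡ g(x,y) + g(x',y')` modulo
`(x^p, y^{p^m}, x'^p, y'^{p^m})`, then `g = 0`. -/
theorem stmt8 (p : ℕ) (hp : p.Prime) (k : Type*) [Field k] [CharP k p]
    (m : ℕ) (hm : 1 ≤ m) (lam : ℕ) (hl1 : 1 ≤ lam) (hl2 : lam ≤ p ^ m - 1)
    (g : MvPolynomial (Fin 2) k)
    (hgx : g.degreeOf 0 < p) (hgy : g.degreeOf 1 < p ^ m)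
    (hcocycle :
      (aeval ![(1 + X 1) ^ lam * X 2 + X 0, X 1 + X 3 + X 1 * X 3] g
        - aeval ![X 0, X 1] g - aeval ![X 2, X 3] g : MvPolynomial (Fin 4) k) ∈
      Ideal.span {(X 0 : MvPolynomial (Fin 4) k) ^ p, X 1 ^ (p ^ m),
        X 2 ^ p, X 3 ^ (p ^ m)}) :
    g = 0 := by
  have hp0 : 0 < p := hp.pos
  have hp2 : 2 ≤ p := hp.two_le
  have hq0 : 0 < p ^ m := pow_pos hp0 m
  have hlamq : lam < p ^ m := by
    have : 1 ≤ p ^ m := hq0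
    omega
  set q := p ^ m with hqdef
  -- degree bound helper
  have degb : ∀ (i : Fin 4) (a b : MvPolynomial (Fin 4) k) (na nb : ℕ),
      degreeOf i a ≤ na → degreeOf i b ≤ nb →
      degreeOf i (aeval ![a, b] g) ≤ degreeOf 0 g * na + degreeOf 1 g * nb := by
    intro i a b na nb ha hb
    refine (myDegreeOf_aeval_le _ _ _).trans ?_
    rw [Fin.sum_univ_two]
    simp only [Matrix.cons_val_zero, Matrix.cons_val_one, Matrix.head_cons]
    exact Nat.add_le_add (Nat.mul_le_mul_left _ ha) (Nat.mul_le_mul_left _ hb)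
  -- STAR 2 : specialize y := 0
  have hmem2 := mySpec_mem hp0 hq0 _ hcocycle ![X 0, 0, X 2, X 3]
    (by intro i; fin_cases i; exacts [Or.inl rfl, Or.inr rfl, Or.inl rfl, Or.inl rfl])
  have he2 : (aeval ![X 0, 0, X 2, X 3] :
        MvPolynomial (Fin 4) k →ₐ[k] MvPolynomial (Fin 4) k)
        (aeval ![(1 + X 1) ^ lam * X 2 + X 0, X 1 + X 3 + X 1 * X 3] g
          - aeval ![X 0, X 1] g - aeval ![X 2, X 3] g)
      = aeval ![X 2 + X 0, X 3] g - aeval ![X 0, 0] g - aeval ![X 2, X 3] g := by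
    rw [map_sub, map_sub, myAeval_pair, myAeval_pair, myAeval_pair]
    simp
  rw [he2] at hmem2
  have star2 : aeval ![X 2 + X 0, (X 3 : MvPolynomial (Fin 4) k)] g
      = aeval ![X 0, 0] g + aeval ![X 2, X 3] g := by
    have hz := myLemA _ hmem2
      (lt_of_le_of_lt (myDeg_sub3
        (degb 0 _ _ 1 0 ((degreeOf_add_le _ _ _).trans (by simp [degreeOf_X]))
          (by simp [degreeOf_X]))
        (degb 0 _ _ 1 0 (by simp [degreeOf_X]) (by simp))
        (degb 0 _ _ 1 0 (by simp [degreeOf_X]) (by simp [degreeOf_X])))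
        (by simpa using hgx))
      (lt_of_le_of_lt (myDeg_sub3
        (degb 1 _ _ 0 0 ((degreeOf_add_le _ _ _).trans (by simp [degreeOf_X]))
          (by simp [degreeOf_X]))
        (degb 1 _ _ 0 0 (by simp [degreeOf_X]) (by simp))
        (degb 1 _ _ 0 0 (by simp [degreeOf_X]) (by simp [degreeOf_X])))
        (by simpa using hq0))
      (lt_of_le_of_lt (myDeg_sub3
        (degb 2 _ _ 1 0 ((degreeOf_add_le _ _ _).trans (by simp [degreeOf_X]))
          (by simp [degreeOf_X]))
        (degb 2 _ _ 1 0 (by simp [degreeOf_X]) (by simp))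
        (degb 2 _ _ 1 0 (by simp [degreeOf_X]) (by simp [degreeOf_X])))
        (by simpa using hgx))
      (lt_of_le_of_lt (myDeg_sub3
        (degb 3 _ _ 0 1 ((degreeOf_add_le _ _ _).trans (by simp [degreeOf_X]))
          (by simp [degreeOf_X]))
        (degb 3 _ _ 0 1 (by simp [degreeOf_X]) (by simp))
        (degb 3 _ _ 0 1 (by simp [degreeOf_X]) (by simp [degreeOf_X])))
        (by simpa using hgy))
    rw [sub_sub] at hz
    exact sub_eq_zero.mp hz
  -- STAR 1 : specialize x := 0, x' := 0
  have hmem1 := mySpec_mem hp0 hq0 _ hcocycle ![0, X 1, 0, X 3]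
    (by intro i; fin_cases i; exacts [Or.inr rfl, Or.inl rfl, Or.inr rfl, Or.inl rfl])
  have he1 : (aeval ![0, X 1, 0, X 3] :
        MvPolynomial (Fin 4) k →ₐ[k] MvPolynomial (Fin 4) k)
        (aeval ![(1 + X 1) ^ lam * X 2 + X 0, X 1 + X 3 + X 1 * X 3] g
          - aeval ![X 0, X 1] g - aeval ![X 2, X 3] g)
      = aeval ![0, X 1 + X 3 + X 1 * X 3] g - aeval ![0, X 1] g - aeval ![0, X 3] g := by
    rw [map_sub, map_sub, myAeval_pair, myAeval_pair, myAeval_pair]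
    simp
  rw [he1] at hmem1
  have hBbound : ∀ i : Fin 4, ∀ n : ℕ,
      degreeOf i (X 1 : MvPolynomial (Fin 4) k)
        + degreeOf i (X 3 : MvPolynomial (Fin 4) k) ≤ n →
      degreeOf i (X 1 + X 3 + X 1 * X 3 : MvPolynomial (Fin 4) k) ≤ n := by
    intro i n h13
    have h1 : degreeOf i (X 1 : MvPolynomial (Fin 4) k) ≤ n :=
      le_trans (Nat.le_add_right _ _) h13
    have h3 : degreeOf i (X 3 : MvPolynomial (Fin 4) k) ≤ n :=
      le_trans (Nat.le_add_left _ _) h13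
    exact (degreeOf_add_le _ _ _).trans
      (max_le ((degreeOf_add_le _ _ _).trans (max_le h1 h3))
        ((degreeOf_mul_le _ _ _).trans h13))
  have star1 : aeval ![0, (X 1 + X 3 + X 1 * X 3 : MvPolynomial (Fin 4) k)] g
      = aeval ![0, X 1] g + aeval ![0, X 3] g := by
    have hz := myLemA _ hmem1
      (lt_of_le_of_lt (myDeg_sub3
        (degb 0 _ _ 0 0 (by simp) (hBbound 0 0 (by simp [degreeOf_X])))
        (degb 0 _ _ 0 0 (by simp) (by simp [degreeOf_X]))
        (degb 0 _ _ 0 0 (by simp) (by simp [degreeOf_X])))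
        (by simpa using hp0))
      (lt_of_le_of_lt (myDeg_sub3
        (degb 1 _ _ 0 1 (by simp) (hBbound 1 1 (by simp [degreeOf_X])))
        (degb 1 _ _ 0 1 (by simp) (by simp [degreeOf_X]))
        (degb 1 _ _ 0 1 (by simp) (by simp [degreeOf_X])))
        (by simpa using hgy))
      (lt_of_le_of_lt (myDeg_sub3
        (degb 2 _ _ 0 0 (by simp) (hBbound 2 0 (by simp [degreeOf_X])))
        (degb 2 _ _ 0 0 (by simp) (by simp [degreeOf_X]))
        (degb 2 _ _ 0 0 (by simp) (by simp [degreeOf_X])))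
        (by simpa using hp0))
      (lt_of_le_of_lt (myDeg_sub3
        (degb 3 _ _ 0 1 (by simp) (hBbound 3 1 (by simp [degreeOf_X])))
        (degb 3 _ _ 0 1 (by simp) (by simp [degreeOf_X]))
        (degb 3 _ _ 0 1 (by simp) (by simp [degreeOf_X])))
        (by simpa using hgy))
    rw [sub_sub] at hz
    exact sub_eq_zero.mp hz
  -- ψ := g(0, y) is zero
  set ψ : Polynomial k := aeval ![(0 : Polynomial k), Polynomial.X] g with hψdef
  have hst1 := congrArg (aeval ![(0 : Polynomial k), Polynomial.X, 0, Polynomial.X] :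
      MvPolynomial (Fin 4) k →ₐ[k] Polynomial k) star1
  rw [map_add, myAeval_pair, myAeval_pair, myAeval_pair] at hst1
  simp only [map_add, map_mul, MvPolynomial.aeval_X, map_zero,
    Matrix.cons_val_zero, Matrix.cons_val_one, Matrix.head_cons,
    Matrix.cons_val_two, Matrix.cons_val_three, Matrix.tail_cons] at hst1
  rw [myPair1 g (Polynomial.X + Polynomial.X + Polynomial.X * Polynomial.X),
    myPair1 g Polynomial.X, ← hψdef, Polynomial.aeval_X_left_apply] at hst1
  -- hst1 : Polynomial.aeval (X + X + X*X) ψ = ψ + ψ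
  have hnψ : ψ.natDegree = 0 := by
    have hdeg2 : (Polynomial.X + Polynomial.X + Polynomial.X * Polynomial.X :
        Polynomial k).natDegree = 2 := by
      have he : (Polynomial.X + Polynomial.X + Polynomial.X * Polynomial.X : Polynomial k)
          = Polynomial.C 1 * Polynomial.X ^ 2 + Polynomial.C 2 * Polynomial.X
            + Polynomial.C 0 := by
        simp only [map_one, map_zero, map_ofNat]
        ring
      rw [he, Polynomial.natDegree_quadratic one_ne_zero]
    have hcomp : ψ.natDegree * 2
        = (Polynomial.aeval (Polynomial.X + Polynomial.X + Polynomial.X * Polynomial.X :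
            Polynomial k) ψ).natDegree := by
      rw [← Polynomial.comp_eq_aeval, Polynomial.natDegree_comp, hdeg2]
    rw [hst1] at hcomp
    have := (Polynomial.natDegree_add_le ψ ψ).trans_eq (max_self _)
    omega
  obtain ⟨cψ, hcψ⟩ := Polynomial.natDegree_eq_zero.mp hnψ
  have h00 : (aeval ![(0 : k), 0] g) = 0 := by
    have h := congrArg (aeval ![(0 : k), 0, 0, 0] : MvPolynomial (Fin 4) k →ₐ[k] k) star1
    rw [map_add, myAeval_pair, myAeval_pair, myAeval_pair] at h
    simp only [map_add, map_mul, MvPolynomial.aeval_X, map_zero,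
      Matrix.cons_val_zero, Matrix.cons_val_one, Matrix.head_cons,
      Matrix.cons_val_two, Matrix.cons_val_three, Matrix.tail_cons,
      add_zero, zero_add, mul_zero, zero_mul] at h
    exact (left_eq_add.mp h)
  have hψ0 : ψ = 0 := by
    have hv : Polynomial.aeval (0 : k) ψ = 0 := by
      rw [← myPair1 g (0 : k)]
      exact h00
    rw [← hcψ] at hv
    rw [Polynomial.aeval_C] at hv
    simp only [Algebra.algebraMap_self_apply] at hv
    rw [← hcψ, hv, map_zero]
  -- decomposition : g = φ(x)
  set φp : Polynomial k := aeval ![Polynomial.X, (0 : Polynomial k)] g with hφdef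
  have hXid : (![X 0, X 1] : Fin 2 → MvPolynomial (Fin 2) k) = X := by
    funext i; fin_cases i <;> rfl
  have hg1 : g = Polynomial.aeval (X 0 : MvPolynomial (Fin 2) k) φp := by
    have h := congrArg (aeval ![X 0, 0, 0, X 1] :
        MvPolynomial (Fin 4) k →ₐ[k] MvPolynomial (Fin 2) k) star2
    rw [map_add, myAeval_pair, myAeval_pair, myAeval_pair] at h
    simp only [map_add, map_mul, MvPolynomial.aeval_X, map_zero,
      Matrix.cons_val_zero, Matrix.cons_val_one, Matrix.head_cons,
      Matrix.cons_val_two, Matrix.cons_val_three, Matrix.tail_cons,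
      add_zero, zero_add, mul_zero, zero_mul] at h
    rw [hXid, aeval_X_left_apply, myPair0 g (X 0 : MvPolynomial (Fin 2) k),
      myPair1 g (X 1 : MvPolynomial (Fin 2) k), ← hψdef, ← hφdef, hψ0, map_zero, add_zero] at h
    exact h
  -- additivity of φ
  have hadd : ∀ u v : Polynomial k,
      Polynomial.aeval (v + u) φp = Polynomial.aeval u φp + Polynomial.aeval v φp := by
    intro u v
    have h := congrArg (aeval ![u, 0, v, (0 : Polynomial k)] :
        MvPolynomial (Fin 4) k →ₐ[k] Polynomial k) star2
    rw [map_add, myAeval_pair, myAeval_pair, myAeval_pair] at h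
    simp only [map_add, map_mul, MvPolynomial.aeval_X, map_zero,
      Matrix.cons_val_zero, Matrix.cons_val_one, Matrix.head_cons,
      Matrix.cons_val_two, Matrix.cons_val_three, Matrix.tail_cons,
      add_zero, zero_add, mul_zero, zero_mul] at h
    rw [myPair0 g (v + u), myPair0 g u, myPair0 g v, ← hφdef] at h
    exact h
  -- degree bound on φ
  have hnd : φp.natDegree < p := by
    refine lt_of_le_of_lt (myNatDegree_aeval_le _ _) ?_
    rw [Fin.sum_univ_two]
    simpa [Polynomial.natDegree_X] using hgx
  -- aeval 0 φp = 0
  have haeval0 : Polynomial.aeval (0 : Polynomial k) φp = 0 := by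
    have h := hadd 0 0
    rw [add_zero] at h
    exact (left_eq_add.mp h)
  -- scaling
  have hscale : ∀ n : ℕ,
      Polynomial.aeval (Polynomial.C ((n : k)) * Polynomial.X) φp = n • φp := by
    intro n
    induction n with
    | zero => simp [haeval0]
    | succ n ih =>
      have hsplit : Polynomial.C (((n + 1 : ℕ) : k)) * Polynomial.X
          = Polynomial.C ((n : k)) * Polynomial.X + Polynomial.X := by
        rw [Nat.cast_add, Nat.cast_one, map_add, map_one]
        ring
      rw [hsplit, hadd Polynomial.X (Polynomial.C ((n : k)) * Polynomial.X),
        Polynomial.aeval_X_left_apply, ih, succ_nsmul]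
      ring
  have hcoeffs : ∀ (n j : ℕ), ((n : k)) ^ j * φp.coeff j = (n : k) * φp.coeff j := by
    intro n j
    have h := Polynomial.ext_iff.mp (hscale n) j
    rw [myCoeff_scale, Polynomial.coeff_smul] at h
    simpa using h
  have ha0 : φp.coeff 0 = 0 := by
    have h := hcoeffs 0 0
    simpa using h
  have haj : ∀ j, 2 ≤ j → φp.coeff j = 0 := by
    intro j hj
    by_contra hne
    have hjlt : j < p := lt_of_le_of_lt (Polynomial.le_natDegree_of_ne_zero hne) hnd
    have hroots : ∀ n : ℕ, ((Polynomial.X : Polynomial k) ^ j - Polynomial.X).eval (n : k) = 0 := by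
      intro n
      have h2 : ((n : k)) ^ j = (n : k) := mul_right_cancel₀ hne (hcoeffs n j)
      simp [h2]
    have hθ : ((Polynomial.X : Polynomial k) ^ j - Polynomial.X) = 0 := by
      refine Polynomial.eq_zero_of_natDegree_lt_card_of_eval_eq_zero _
        (f := fun i : Fin p => ((i : ℕ) : k)) ?_ (fun i => hroots i) ?_
      · intro a b hab
        exact Fin.ext (CharP.natCast_injOn_Iio k p (Set.mem_Iio.mpr a.isLt)
          (Set.mem_Iio.mpr b.isLt) hab)
      · refine lt_of_le_of_lt (Polynomial.natDegree_sub_le _ _) ?_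
        simp only [Polynomial.natDegree_X_pow, Polynomial.natDegree_X, Fintype.card_fin]
        omega
    have hco : ((Polynomial.X : Polynomial k) ^ j - Polynomial.X).coeff j = 1 := by
      rw [Polynomial.coeff_sub, Polynomial.coeff_X_pow, Polynomial.coeff_X,
        if_pos rfl, if_neg (by omega)]
      ring
    rw [hθ] at hco
    simp at hco
  have hφlin : φp = Polynomial.C (φp.coeff 1) * Polynomial.X := by
    ext j
    rw [Polynomial.coeff_C_mul, Polynomial.coeff_X]
    rcases j with _ | _ | jj
    · simp [ha0]
    · simp
    · rw [haj _ (by omega), if_neg (by omega)]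
      ring
  -- g is linear : g = C a1 * X 0
  set a1 : k := φp.coeff 1 with ha1def
  have hglin : g = C a1 * X 0 := by
    rw [hg1, hφlin, map_mul, Polynomial.aeval_C, Polynomial.aeval_X, MvPolynomial.algebraMap_eq]
  -- plug into the cocycle condition
  rw [hglin] at hcocycle
  have hrw : (aeval ![(1 + X 1) ^ lam * X 2 + X 0, X 1 + X 3 + X 1 * X 3]
        (C a1 * X 0 : MvPolynomial (Fin 2) k)
        - aeval ![X 0, X 1] (C a1 * X 0 : MvPolynomial (Fin 2) k)
        - aeval ![X 2, X 3] (C a1 * X 0 : MvPolynomial (Fin 2) k) : MvPolynomial (Fin 4) k)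
      = C a1 * (((1 + X 1) ^ lam - 1) * X 2) := by
    simp only [map_mul, aeval_C, MvPolynomial.aeval_X, Matrix.cons_val_zero,
      MvPolynomial.algebraMap_eq]
    ring
  rw [hrw] at hcocycle
  -- degree bounds for the final application of exactness
  have hcore : ∀ (i : Fin 4) (n1 n2 : ℕ),
      degreeOf i (1 + X 1 : MvPolynomial (Fin 4) k) ≤ n1 →
      degreeOf i (X 2 : MvPolynomial (Fin 4) k) ≤ n2 →
      degreeOf i (C a1 * (((1 + X 1) ^ lam - 1) * X 2) : MvPolynomial (Fin 4) k)
        ≤ lam * n1 + n2 := by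
    intro i n1 n2 h1 h2
    refine (degreeOf_mul_le _ _ _).trans ?_
    rw [degreeOf_C, zero_add]
    refine (degreeOf_mul_le _ _ _).trans (Nat.add_le_add ?_ h2)
    refine (degreeOf_sub_le _ _ _).trans
      (max_le ((degreeOf_pow_le _ _ _).trans (Nat.mul_le_mul_left _ h1)) ?_)
    rw [myDegreeOf_one]
    exact Nat.zero_le _
  have hone : ∀ i : Fin 4, degreeOf i (1 + X 1 : MvPolynomial (Fin 4) k)
      ≤ if i = 1 then 1 else 0 := by
    intro i
    refine (degreeOf_add_le _ _ _).trans ?_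
    simp [myDegreeOf_one, degreeOf_X]
  have hzero := myLemA _ hcocycle
    (lt_of_le_of_lt ((hcore 0 0 0 (by simpa using hone 0) (by simp [degreeOf_X])).trans
      (by omega : lam * 0 + 0 ≤ 0)) hp0)
    (lt_of_le_of_lt (hcore 1 1 0 (by simpa using hone 1) (by simp [degreeOf_X]))
      (by omega : lam * 1 + 0 < q))
    (lt_of_le_of_lt (hcore 2 0 1 (by simpa using hone 2) (by simp [degreeOf_X]))
      (by omega : lam * 0 + 1 < p))
    (lt_of_le_of_lt ((hcore 3 0 0 (by simpa using hone 3) (by simp [degreeOf_X])).trans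
      (by omega : lam * 0 + 0 ≤ 0)) hq0)
  -- conclude a1 = 0
  have ha1 : a1 = 0 := by
    rcases mul_eq_zero.mp hzero with h | h
    · simpa using h
    · exfalso
      rcases mul_eq_zero.mp h with h2 | h2
      · have hpow : ((1 : MvPolynomial (Fin 4) k) + X 1) ^ lam = 1 := sub_eq_zero.mp h2
        have h3 := congrArg (aeval (fun _ => (Polynomial.X : Polynomial k)) :
            MvPolynomial (Fin 4) k →ₐ[k] Polynomial k) hpow
        simp only [map_pow, map_add, map_one, MvPolynomial.aeval_X] at h3
        have h1X : (1 + Polynomial.X : Polynomial k) = Polynomial.X + Polynomial.C 1 := by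
          rw [Polynomial.C_1, add_comm]
        rw [h1X] at h3
        have h4 := congrArg Polynomial.natDegree h3
        rw [(Polynomial.monic_X_add_C (1 : k)).natDegree_pow,
          Polynomial.natDegree_X_add_C, Polynomial.natDegree_one, mul_one] at h4
        omega
      · exact MvPolynomial.X_ne_zero 2 h2
  rw [hglin, ha1, map_zero, zero_mul]
end

section
/- Let p be a prime, k a field of characteristic p, m a positive integer, and λ a natural number. In the ring A₄ = k[x,y,x',y']/(x^p, y^{p^m}, x'^p, y'^{p^m}), the element 1+y' is invertible; set x'' = −(1+y')^{−λ} x' and y'' = (1+y')^{−1} − 1, so that (x'',y'') is the inverse of (x',y') for the group law of G_λ. Then the conjugate (x',y') ∘ ((x,y) ∘ (x'',y'')) has second coordinate exactly y, and its first coordinate is congruent to (1+y')^λ · x − λ·x'·y modulo the ideal of A₄ generated by x², x·y, y². (This computes the adjoint representation of G_λ: Ad(x',y') acts on (x,y) mod (x,y)² by the matrix [[(1+y')^λ, −λx'],[0,1]].) -/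
open MvPolynomial

/-- The ring `A₄ = k[x,y,x',y']/(x^p, y^{p^m}, x'^p, y'^{p^m})`. -/
abbrev G4 (k : Type*) [CommRing k] (p m : ℕ) : Type _ :=
  MvPolynomial (Fin 4) k ⧸
    Ideal.span {(X 0 : MvPolynomial (Fin 4) k) ^ p, X 1 ^ (p ^ m),
      X 2 ^ p, X 3 ^ (p ^ m)}

/-- The image of a variable in `A₄`: `q4 k p m 0 = x`, `q4 k p m 1 = y`,
`q4 k p m 2 = x'`, `q4 k p m 3 = y'`. -/
noncomputable def q4 (k : Type*) [CommRing k] (p m : ℕ) (i : Fin 4) : G4 k p m :=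
  Ideal.Quotient.mk _ (X i)

private lemma binom_aux {R : Type*} [CommRing R] (y : R) (n : ℕ) :
    ∃ c : R, (1 + y) ^ n = 1 + n * y + y ^ 2 * c := by
  induction n with
  | zero => exact ⟨0, by ring⟩
  | succ n ih =>
    obtain ⟨c, hc⟩ := ih
    exact ⟨(n : R) + c + y * c, by rw [pow_succ, hc]; push_cast; ring⟩

set_option maxHeartbeats 1000000 in
/-- In `A₄` the element `1+y'` is a unit; setting
`x'' = -(1+y')^{-λ} x'` and `y'' = (1+y')^{-1} - 1` (the inverse of `(x',y')` for the
group law of `G_λ`), the conjugate `(x',y') ∘ ((x,y) ∘ (x'',y''))` has second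
coordinate exactly `y`, and its first coordinate is congruent to
`(1+y')^λ·x - λ·x'·y` modulo the ideal `(x², x·y, y²)`. Thus `Ad(x',y')` acts on
`(x,y)` mod `(x,y)²` by the matrix `[[(1+y')^λ, -λx'],[0,1]]`. -/
theorem stmt10 (p : ℕ) (hp : p.Prime) (k : Type*) [Field k] [CharP k p]
    (m : ℕ) (hm : 1 ≤ m) (lam : ℕ) :
    IsUnit (1 + q4 k p m 3) ∧
    ∀ u : (G4 k p m)ˣ, (u : G4 k p m) = 1 + q4 k p m 3 →
      -- inverse point (x'', y'')
      ∀ x'' y'' : G4 k p m,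
        x'' = -(((u⁻¹ : (G4 k p m)ˣ) : G4 k p m) ^ lam * q4 k p m 2) →
        y'' = ((u⁻¹ : (G4 k p m)ˣ) : G4 k p m) - 1 →
        -- second coordinate of the conjugate is exactly y
        (q4 k p m 3 + (q4 k p m 1 + y'' + q4 k p m 1 * y'')
            + q4 k p m 3 * (q4 k p m 1 + y'' + q4 k p m 1 * y'') = q4 k p m 1) ∧
        -- first coordinate is ≡ (1+y')^λ x - λ x' y mod (x², xy, y²)
        ((1 + q4 k p m 3) ^ lam * ((1 + q4 k p m 1) ^ lam * x'' + q4 k p m 0)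
            + q4 k p m 2
          - ((1 + q4 k p m 3) ^ lam * q4 k p m 0
            - (lam : G4 k p m) * q4 k p m 2 * q4 k p m 1) ∈
          Ideal.span {q4 k p m 0 ^ 2, q4 k p m 0 * q4 k p m 1,
            q4 k p m 1 ^ 2}) := by
  have hnil : IsNilpotent (q4 k p m 3) := ⟨p ^ m, by
    rw [q4, ← map_pow]
    exact Ideal.Quotient.eq_zero_iff_mem.mpr (Ideal.subset_span
      (Set.mem_insert_of_mem _ (Set.mem_insert_of_mem _ (Set.mem_insert_of_mem _ rfl))))⟩
  refine ⟨hnil.isUnit_one_add, ?_⟩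
  intro u hu x'' y'' hx'' hy''
  subst hx'' hy''
  have hv : ((u⁻¹ : (G4 k p m)ˣ) : G4 k p m) * (1 + q4 k p m 3) = 1 := by
    rw [← hu]; exact u.inv_mul
  constructor
  · linear_combination (1 + q4 k p m 1) * hv
  · obtain ⟨c, hc⟩ := binom_aux (q4 k p m 1) lam
    have h1 : (1 + q4 k p m 3) ^ lam * ((u⁻¹ : (G4 k p m)ˣ) : G4 k p m) ^ lam = 1 := by
      rw [← mul_pow, mul_comm, hv, one_pow]
    have hy2 : q4 k p m 1 ^ 2 ∈ Ideal.span {q4 k p m 0 ^ 2, q4 k p m 0 * q4 k p m 1,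
        q4 k p m 1 ^ 2} := Ideal.subset_span
      (Set.mem_insert_of_mem _ (Set.mem_insert_of_mem _ rfl))
    have hmem := Ideal.mul_mem_left _ (-(q4 k p m 2 * c)) hy2
    convert hmem using 1
    linear_combination (-(q4 k p m 2) * (1 + lam * q4 k p m 1 + c * q4 k p m 1 ^ 2)) * h1 +
      (-(q4 k p m 2) * ((1 + q4 k p m 3) ^ lam * ((u⁻¹ : (G4 k p m)ˣ) : G4 k p m) ^ lam)) * hc
end

section
/- Let p be a prime, k a field of characteristic p, m a positive integer, and λ an integer with 1 ≤ λ ≤ p^m − 1. Then in the polynomial ring k[x,x',y] one has W_p((1+y)^λ x, (1+y)^λ x') ≡ W_p(x,x') modulo the ideal (y^{p^m}) if and only if p^{m−1} divides λ. (This is the invariance computation showing that the class of W_p in H²(α_p, G_a) is μ_{p^m}-invariant exactly when v_p(λ) = m−1, which governs the computation of H²(G_λ, V_ad).) -/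
open MvPolynomial

/-- Pushing an `aeval` of an integer `MvPolynomial` through a ring hom. -/
lemma aux_map_aeval {S T F : Type*} [CommRing S] [CommRing T] [Algebra ℤ S] [Algebra ℤ T]
    [FunLike F S T] [RingHomClass F S T] (φ : F)
    (v : Fin 2 → S) (W : MvPolynomial (Fin 2) ℤ) :
    φ (aeval v W) = aeval (fun i => φ (v i)) W := by
  have h := eval₂_comp_left ((φ : S →+* T)) (algebraMap ℤ S) v W
  simp only [RingHom.coe_coe, Function.comp_def] at h
  rw [aeval_def, h, aeval_def]
  congr 1
  exact RingHom.ext_int _ _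

/-- Order of `(1+X)^n - 1` in characteristic `p`. -/
lemma aux_order {p : ℕ} (hp : p.Prime) (R : Type*) [CommRing R] [CharP R p] [Nontrivial R]
    (s n : ℕ) (hn : 1 ≤ n) :
    (Polynomial.X ^ (p ^ s) ∣ ((1 + Polynomial.X : Polynomial R) ^ n - 1)) ↔ p ^ s ∣ n := by
  haveI : Fact p.Prime := ⟨hp⟩
  constructor
  · intro h
    by_contra hnd
    set v := n.factorization p with hv
    have hvs : v < s := by
      by_contra hle
      exact hnd (dvd_trans (pow_dvd_pow p (le_of_not_gt hle)) (Nat.ordProj_dvd n p))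
    set u := n / p ^ v with hu
    have hnu : n = p ^ v * u := (Nat.ordProj_mul_ordCompl_eq_self n p).symm
    have hpu : ¬ p ∣ u := Nat.not_dvd_ordCompl hp (by omega)
    have hfe : ((1 + Polynomial.X : Polynomial R) ^ n - 1)
        = Polynomial.expand R (p ^ v) ((1 + Polynomial.X) ^ u - 1) := by
      rw [hnu, pow_mul, add_pow_char_pow, one_pow, map_sub, map_pow, map_add, map_one,
        Polynomial.expand_X]
    have hc : ((1 + Polynomial.X : Polynomial R) ^ n - 1).coeff (p ^ v) = (u : R) := by
      rw [hfe, Polynomial.coeff_expand (pow_pos hp.pos v), if_pos (dvd_refl _),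
        Nat.div_self (pow_pos hp.pos v), Polynomial.coeff_sub,
        Polynomial.coeff_one_add_X_pow, Nat.choose_one_right, Polynomial.coeff_one]
      simp
    have h0 : ((1 + Polynomial.X : Polynomial R) ^ n - 1).coeff (p ^ v) = 0 :=
      Polynomial.X_pow_dvd_iff.mp h _ (Nat.pow_lt_pow_right hp.one_lt hvs)
    rw [hc] at h0
    exact hpu ((CharP.cast_eq_zero_iff R p u).mp h0)
  · rintro ⟨a, rfl⟩
    have heq : ((1 + Polynomial.X : Polynomial R) ^ (p ^ s * a) - 1)
        = (1 + Polynomial.X ^ (p ^ s)) ^ a - 1 ^ a := by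
      rw [pow_mul, add_pow_char_pow, one_pow, one_pow]
    rw [heq]
    have hd := sub_dvd_pow_sub_pow (1 + Polynomial.X ^ (p ^ s) : Polynomial R) 1 a
    simpa using hd

/-- For `1 ≤ λ ≤ p^m - 1`, in `k[x,x',y]` (variables `X 0 = x`,
`X 1 = x'`, `X 2 = y`) one has
`W_p((1+y)^λ x, (1+y)^λ x') ≡ W_p(x,x')` modulo `(y^{p^m})` iff `p^{m-1} ∣ λ`,
where `W_p ∈ ℤ[X,Y]` is the unique polynomial with
`p·W_p = (X+Y)^p - X^p - Y^p`. -/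
theorem stmt11 (p : ℕ) (hp : p.Prime) (k : Type*) [Field k] [CharP k p]
    (m : ℕ) (hm : 1 ≤ m) (lam : ℕ) (hl1 : 1 ≤ lam) (hl2 : lam ≤ p ^ m - 1)
    (W : MvPolynomial (Fin 2) ℤ)
    (hW : (p : MvPolynomial (Fin 2) ℤ) * W =
      (X 0 + X 1) ^ p - X 0 ^ p - X 1 ^ p) :
    ((aeval ![(1 + X 2) ^ lam * X 0, (1 + X 2) ^ lam * X 1] W
        - aeval ![X 0, X 1] W : MvPolynomial (Fin 3) k) ∈
      Ideal.span {(X 2 : MvPolynomial (Fin 3) k) ^ (p ^ m)}) ↔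
    p ^ (m - 1) ∣ lam := by
  classical
  -- key evaluation identity over ℤ
  have key : ∀ v : Fin 2 → MvPolynomial (Fin 3) ℤ,
      (p : MvPolynomial (Fin 3) ℤ) * aeval v W = (v 0 + v 1) ^ p - v 0 ^ p - v 1 ^ p := by
    intro v
    have := congrArg (aeval v) hW
    simpa using this
  -- homogeneity of W over ℤ
  have homog : ∀ u : MvPolynomial (Fin 3) ℤ,
      aeval ![u * X 0, u * X 1] W = u ^ p * aeval ![X 0, X 1] W := by
    intro u
    have hp0 : (p : MvPolynomial (Fin 3) ℤ) ≠ 0 := by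
      exact_mod_cast (Nat.cast_ne_zero (R := MvPolynomial (Fin 3) ℤ)).mpr hp.ne_zero
    apply mul_left_cancel₀ hp0
    have h1 := key ![u * X 0, u * X 1]
    have h2 := key ![(X 0 : MvPolynomial (Fin 3) ℤ), X 1]
    simp only [Matrix.cons_val_zero, Matrix.cons_val_one, Matrix.head_cons] at h1 h2
    rw [h1]
    calc (u * X 0 + u * X 1) ^ p - (u * X 0) ^ p - (u * X 1) ^ p
        = u ^ p * ((X 0 + X 1) ^ p - X 0 ^ p - X 1 ^ p) := by
          rw [← mul_add, mul_pow, mul_pow, mul_pow]; ring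
      _ = u ^ p * ((p : MvPolynomial (Fin 3) ℤ) * aeval ![(X 0 : MvPolynomial (Fin 3) ℤ), X 1] W) := by
          rw [h2]
      _ = (p : MvPolynomial (Fin 3) ℤ) * (u ^ p * aeval ![(X 0 : MvPolynomial (Fin 3) ℤ), X 1] W) := by
          ring
  -- transfer to k
  set φ : MvPolynomial (Fin 3) ℤ →+* MvPolynomial (Fin 3) k :=
    MvPolynomial.map (Int.castRingHom k) with hφ
  have hk : (aeval ![(1 + X 2) ^ lam * X 0, (1 + X 2) ^ lam * X 1] W : MvPolynomial (Fin 3) k)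
      = ((1 + X 2 : MvPolynomial (Fin 3) k) ^ (lam * p)) * aeval ![X 0, X 1] W := by
    have h := congrArg φ (homog ((1 + X 2) ^ lam))
    rw [map_mul, aux_map_aeval φ, aux_map_aeval φ, map_pow, map_pow, map_add, map_one] at h
    have hl : (fun i => φ (![(1 + X 2) ^ lam * X 0, (1 + X 2) ^ lam * X 1] i))
        = ![(1 + X 2 : MvPolynomial (Fin 3) k) ^ lam * X 0, (1 + X 2) ^ lam * X 1] := by
      funext i
      fin_cases i <;> simp [hφ]
    have hr : (fun i => φ (![(X 0 : MvPolynomial (Fin 3) ℤ), X 1] i))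
        = ![(X 0 : MvPolynomial (Fin 3) k), X 1] := by
      funext i
      fin_cases i <;> simp [hφ]
    rw [hl, hr] at h
    simp only [hφ, MvPolynomial.map_X] at h
    rw [h, ← pow_mul]
  have hdiff : (aeval ![(1 + X 2) ^ lam * X 0, (1 + X 2) ^ lam * X 1] W
      - aeval ![X 0, X 1] W : MvPolynomial (Fin 3) k)
      = ((1 + X 2 : MvPolynomial (Fin 3) k) ^ (lam * p) - 1)
        * aeval ![X 0, X 1] W := by
    rw [hk, sub_mul, one_mul]
  -- the equivalence moving X 2 to the polynomial variable
  set e : MvPolynomial (Fin 3) k ≃ₐ[k] Polynomial (MvPolynomial (Fin 2) k) :=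
    (renameEquiv k (Equiv.swap (0 : Fin 3) 2)).trans (finSuccEquiv k 2) with he
  have he2 : e (X 2) = Polynomial.X := by
    rw [he]
    simp only [AlgEquiv.trans_apply, renameEquiv_apply, rename_X]
    rw [Equiv.swap_apply_right]
    exact finSuccEquiv_X_zero
  have he0 : e (X 0) = Polynomial.C (X 1) := by
    rw [he]
    simp only [AlgEquiv.trans_apply, renameEquiv_apply, rename_X]
    rw [Equiv.swap_apply_left]
    rw [show (2 : Fin 3) = Fin.succ 1 from rfl]
    exact finSuccEquiv_X_succ
  have he1 : e (X 1) = Polynomial.C (X 0) := by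
    rw [he]
    simp only [AlgEquiv.trans_apply, renameEquiv_apply, rename_X]
    rw [Equiv.swap_apply_of_ne_of_ne (by decide) (by decide)]
    rw [show (1 : Fin 3) = Fin.succ 0 from rfl]
    exact finSuccEquiv_X_succ
  -- the constant c = W(x', x)
  set c : MvPolynomial (Fin 2) k := aeval ![X 1, X 0] W with hc
  have heW : e (aeval ![X 0, X 1] W) = Polynomial.C c := by
    rw [aux_map_aeval e, hc,
      aux_map_aeval (Polynomial.C : MvPolynomial (Fin 2) k →+* Polynomial (MvPolynomial (Fin 2) k))]
    have hfun : (fun i => e (![X 0, X 1] i))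
        = fun i => Polynomial.C ((![X 1, X 0] : Fin 2 → MvPolynomial (Fin 2) k) i) := by
      funext i
      fin_cases i <;> simp [he0, he1]
    rw [hfun]
  -- c ≠ 0
  have hcne : c ≠ 0 := by
    set τ : MvPolynomial (Fin 2) k →ₐ[k] Polynomial k :=
      (aeval ![(1 : Polynomial k), Polynomial.X]) with hτ
    have hτc : τ c = aeval ![Polynomial.X, (1 : Polynomial k)] W := by
      rw [hc, aux_map_aeval τ]
      have hfun : (fun i => τ (![X 1, X 0] i)) = ![Polynomial.X, (1 : Polynomial k)] := by
        funext i
        fin_cases i <;> simp [hτ]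
      rw [hfun]
    set wz : Polynomial ℤ := aeval ![Polynomial.X, (1 : Polynomial ℤ)] W with hwz
    have hmap : Polynomial.mapRingHom (Int.castRingHom k) wz
        = aeval ![Polynomial.X, (1 : Polynomial k)] W := by
      rw [hwz, aux_map_aeval (Polynomial.mapRingHom (Int.castRingHom k))]
      have hfun : (fun i => Polynomial.mapRingHom (Int.castRingHom k) (![Polynomial.X, (1 : Polynomial ℤ)] i))
          = ![Polynomial.X, (1 : Polynomial k)] := by
        funext i
        fin_cases i <;> simp
      rw [hfun]
    have hwz1 : wz.coeff 1 = 1 := by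
      have hev := congrArg (aeval ![Polynomial.X, (1 : Polynomial ℤ)]) hW
      simp only [map_mul, map_sub, map_pow, map_add, aeval_X, map_natCast,
        Matrix.cons_val_zero, Matrix.cons_val_one, Matrix.head_cons, map_one, one_pow,
        ← hwz] at hev
      have hco := congrArg (fun q : Polynomial ℤ => q.coeff 1) hev
      simp only [Polynomial.coeff_sub] at hco
      rw [show ((p : Polynomial ℤ)) = Polynomial.C (p : ℤ) by simp] at hco
      rw [Polynomial.coeff_C_mul, add_comm Polynomial.X (1 : Polynomial ℤ),
        Polynomial.coeff_one_add_X_pow, Polynomial.coeff_X_pow,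
        if_neg (Ne.symm hp.ne_one), Polynomial.coeff_one, Nat.choose_one_right] at hco
      have hco' : (p : ℤ) * wz.coeff 1 = (p : ℤ) * 1 := by
        simpa using hco
      exact mul_left_cancel₀ (by exact_mod_cast hp.ne_zero) hco'
    have hcoeff : (τ c).coeff 1 = 1 := by
      rw [hτc, ← hmap, Polynomial.coe_mapRingHom, Polynomial.coeff_map, hwz1]
      simp
    intro h
    rw [h, map_zero] at hcoeff
    simp at hcoeff
  -- transfer divisibility through e
  rw [Ideal.mem_span_singleton, hdiff]
  have hediv : (X 2 : MvPolynomial (Fin 3) k) ^ (p ^ m)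
        ∣ ((1 + X 2 : MvPolynomial (Fin 3) k) ^ (lam * p) - 1) * aeval ![X 0, X 1] W
      ↔ (Polynomial.X : Polynomial (MvPolynomial (Fin 2) k)) ^ (p ^ m)
        ∣ ((1 + Polynomial.X) ^ (lam * p) - 1) * Polynomial.C c := by
    have hmapped : e (((1 + X 2 : MvPolynomial (Fin 3) k) ^ (lam * p) - 1)
          * aeval ![X 0, X 1] W)
        = ((1 + Polynomial.X) ^ (lam * p) - 1) * Polynomial.C c := by
      rw [map_mul, map_sub, map_pow, map_add, map_one, he2, heW]
    have hX : e ((X 2 : MvPolynomial (Fin 3) k) ^ (p ^ m)) = Polynomial.X ^ (p ^ m) := by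
      rw [map_pow, he2]
    constructor
    · intro h
      rw [← hmapped, ← hX]
      exact map_dvd e h
    · intro h
      have h2 := map_dvd e.symm h
      rw [← hmapped, ← hX, AlgEquiv.symm_apply_apply, AlgEquiv.symm_apply_apply] at h2
      exact h2
  rw [hediv]
  -- drop the nonzero constant
  have hdropC : (Polynomial.X : Polynomial (MvPolynomial (Fin 2) k)) ^ (p ^ m)
        ∣ ((1 + Polynomial.X) ^ (lam * p) - 1) * Polynomial.C c
      ↔ (Polynomial.X : Polynomial (MvPolynomial (Fin 2) k)) ^ (p ^ m)
        ∣ ((1 + Polynomial.X) ^ (lam * p) - 1) := by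
    constructor
    · intro h
      rw [Polynomial.X_pow_dvd_iff] at h ⊢
      intro d hd
      have h' := h d hd
      rw [Polynomial.coeff_mul_C] at h'
      rcases mul_eq_zero.mp h' with h'' | h''
      · exact h''
      · exact absurd h'' hcne
    · intro h
      exact h.mul_right _
  rw [hdropC]
  rw [aux_order hp (MvPolynomial (Fin 2) k) m (lam * p) (Nat.one_le_iff_ne_zero.mpr
    (Nat.mul_ne_zero (by omega) hp.ne_zero))]
  have hpm : p ^ m = p ^ (m - 1) * p := by
    rw [← pow_succ]
    congr 1
    omega
  rw [hpm, Nat.mul_dvd_mul_iff_right hp.pos]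
end
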